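/- arXiv:1402.1368 — 5 statements merged into one kernel-verified Lean document; each statement's English description precedes it below -/
import Mathlib

section
/- Let ξ_s and (ξ_p)_{p∈P} be finite-range random variables on a common probability space and let A ⊆ B be finite subsets of P. If the joint variable (ξ_p)_{p∈A} is independent of ξ_s and ξ_s is almost surely a function of the joint variable (ξ_p)_{p∈B}, then H((ξ_p)_{p∈B}) ≥ H((ξ_p)_{p∈A}) + H(ξ_s). -/
open MeasureTheory Finset
open scoped ENNReal

namespace OnlineSecretSharing

noncomputable section

/-- Shannon entropy of a finitely-valued random variable `X` on the probability
space `(Ω, μ)`. -/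
def H {Ω : Type*} [MeasurableSpace Ω] (μ : Measure Ω) {S : Type*} [Fintype S]
    (X : Ω → S) : ℝ :=
  ∑ s : S, Real.negMulLog (μ (X ⁻¹' {s})).toReal

/-- `Y` is almost surely a function of `X`. -/
def DeterminedBy {Ω : Type*} [MeasurableSpace Ω] (μ : Measure Ω) {S T : Type*}
    (Y : Ω → T) (X : Ω → S) : Prop :=
  ∃ f : S → T, ∀ᵐ ω ∂μ, Y ω = f (X ω)

/-- The (finitely-valued) random variables `X` and `Y` are statistically
independent. -/
def IndepRV {Ω : Type*} [MeasurableSpace Ω] (μ : Measure Ω) {S T : Type*}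
    (X : Ω → S) (Y : Ω → T) : Prop :=
  ∀ (s : S) (t : T), μ (X ⁻¹' {s} ∩ Y ⁻¹' {t}) = μ (X ⁻¹' {s}) * μ (Y ⁻¹' {t})

/-- The joint random variable `(ξ_p)_{p ∈ A}`. -/
def joint {Ω P : Type*} {S : P → Type*} (ξ : (p : P) → Ω → S p) (A : Finset P) :
    Ω → ((p : A) → S (p : P)) :=
  fun ω p => ξ (p : P) ω

/-- An access structure: a nonempty Sperner family of nonempty subsets of the set
`P` of participants; the members of `edges` are the minimal qualified subsets. -/
structure AccessStructure (P : Type*) where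
  (edges : Finset (Finset P))
  (nonempty : edges.Nonempty)
  (mem_nonempty : ∀ E ∈ edges, E.Nonempty)
  (sperner : ∀ E ∈ edges, ∀ F ∈ edges, E ⊆ F → E = F)

/-- A set of participants is qualified if it contains a minimal qualified set. -/
def AccessStructure.Qualified {P : Type*} (Γ : AccessStructure P) (A : Finset P) : Prop :=
  ∃ E ∈ Γ.edges, E ⊆ A

/-- The degree of a participant: the number of hyperedges containing it. -/
def AccessStructure.degree {P : Type*} [DecidableEq P] (Γ : AccessStructure P)
    (p : P) : ℕ :=
  (Γ.edges.filter fun E => p ∈ E).card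

/-- The maximal degree of an access structure. -/
def AccessStructure.maxDegree {P : Type*} [Fintype P] [DecidableEq P]
    (Γ : AccessStructure P) : ℕ :=
  Finset.univ.sup Γ.degree

/-- A (candidate) secret sharing scheme: finite-range random variables on a common
probability space, one secret and one share for each participant. -/
structure Scheme (P : Type) where
  (Ω : Type)
  [ms : MeasurableSpace Ω]
  (μ : Measure Ω)
  (isProb : IsProbabilityMeasure μ)
  (Sec : Type)
  [secFin : Fintype Sec]
  (sec : Ω → Sec)
  (Sh : P → Type)
  [shFin : ∀ p, Fintype (Sh p)]
  (sh : (p : P) → Ω → Sh p)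

attribute [instance] Scheme.ms Scheme.secFin Scheme.shFin

/-- A perfect secret sharing scheme realizing `Γ`: the secret has positive entropy,
qualified sets determine the secret, and the shares of unqualified sets are
independent of the secret. -/
def Scheme.Realizes {P : Type} [Fintype P] [DecidableEq P] (𝒮 : Scheme P)
    (Γ : AccessStructure P) : Prop :=
  0 < H 𝒮.μ 𝒮.sec ∧
  (∀ A : Finset P, Γ.Qualified A → DeterminedBy 𝒮.μ 𝒮.sec (joint 𝒮.sh A)) ∧
  (∀ A : Finset P, ¬ Γ.Qualified A → IndepRV 𝒮.μ (joint 𝒮.sh A) 𝒮.sec)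

/-- Complexity of a scheme: (size of the largest share) / (size of the secret). -/
def Scheme.complexity {P : Type} [Fintype P] (𝒮 : Scheme P) : ℝ≥0∞ :=
  (⨆ p : P, ENNReal.ofReal (H 𝒮.μ (𝒮.sh p))) / ENNReal.ofReal (H 𝒮.μ 𝒮.sec)

/-- The (off-line) complexity `σ(Γ)` of an access structure. -/
def sigmaC {P : Type} [Fintype P] [DecidableEq P] (Γ : AccessStructure P) : ℝ≥0∞ :=
  ⨅ (𝒮 : Scheme P) (_ : 𝒮.Realizes Γ), 𝒮.complexity

/-- An on-line secret sharing scheme: a secret, a family `(ξ_α)_{α ∈ Idx}` of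
finite-range random variables, and a dealer strategy `D` assigning an index to
every finite history; a history is a list whose `j`-th entry is the set of
(position-encoded) minimal qualified sets revealed when the `j`-th participant
arrives. -/
structure OnlineScheme (P : Type) where
  (Ω : Type)
  [ms : MeasurableSpace Ω]
  (μ : Measure Ω)
  (isProb : IsProbabilityMeasure μ)
  (Sec : Type)
  [secFin : Fintype Sec]
  (sec : Ω → Sec)
  (Idx : Type)
  (ShT : Idx → Type)
  [shFin : ∀ α, Fintype (ShT α)]
  (ξ : (α : Idx) → Ω → ShT α)
  (D : List (Finset (Finset ℕ)) → Idx)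

attribute [instance] OnlineScheme.ms OnlineScheme.secFin OnlineScheme.shFin

/-- The set of hyperedges (encoded via positions in the arrival order `π`) revealed
when the `j`-th participant arrives: those minimal qualified sets containing the
`j`-th participant all whose members arrived by time `j`. -/
def hist {P : Type} [Fintype P] [DecidableEq P] (Γ : AccessStructure P) {n : ℕ}
    (π : Fin n ≃ P) (j : Fin n) : Finset (Finset ℕ) :=
  (Γ.edges.filter fun E => π j ∈ E ∧ ∀ p ∈ E, ∃ i : Fin n, i ≤ j ∧ π i = p).image
    fun E => E.image fun p => ((π.symm p : Fin n) : ℕ)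

/-- The history seen by the dealer when the `j`-th participant arrives. -/
def histList {P : Type} [Fintype P] [DecidableEq P] (Γ : AccessStructure P) {n : ℕ}
    (π : Fin n ≃ P) (j : Fin n) : List (Finset (Finset ℕ)) :=
  ((List.finRange n).take (j.1 + 1)).map (hist Γ π)

/-- The assignment of shares produced by an on-line scheme for the arrival
order `π`, as an (off-line) scheme. -/
def OnlineScheme.toScheme {P : Type} [Fintype P] [DecidableEq P] (𝒪 : OnlineScheme P)
    (Γ : AccessStructure P) (π : Fin (Fintype.card P) ≃ P) : Scheme P where
  Ω := 𝒪.Ω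
  ms := 𝒪.ms
  μ := 𝒪.μ
  isProb := 𝒪.isProb
  Sec := 𝒪.Sec
  secFin := 𝒪.secFin
  sec := 𝒪.sec
  Sh := fun p => 𝒪.ShT (𝒪.D (histList Γ π (π.symm p)))
  shFin := fun _ => 𝒪.shFin _
  sh := fun _ => 𝒪.ξ _

/-- An on-line scheme realizes `Γ` if for every arrival order the induced
assignment of shares is a perfect secret sharing scheme realizing `Γ`. -/
def OnlineScheme.Realizes {P : Type} [Fintype P] [DecidableEq P] (𝒪 : OnlineScheme P)
    (Γ : AccessStructure P) : Prop :=
  ∀ π : Fin (Fintype.card P) ≃ P, (𝒪.toScheme Γ π).Realizes Γ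

/-- Complexity of an on-line scheme. -/
def OnlineScheme.complexity {P : Type} (𝒪 : OnlineScheme P) : ℝ≥0∞ :=
  (⨆ α : 𝒪.Idx, ENNReal.ofReal (H 𝒪.μ (𝒪.ξ α))) / ENNReal.ofReal (H 𝒪.μ 𝒪.sec)

/-- The on-line complexity `o(Γ)` of an access structure. -/
def oC {P : Type} [Fintype P] [DecidableEq P] (Γ : AccessStructure P) : ℝ≥0∞ :=
  ⨅ (𝒪 : OnlineScheme P) (_ : 𝒪.Realizes Γ), 𝒪.complexity

/-- An entropy function for `Γ`: rules (a)–(e) of the entropy method. -/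
def IsEntropyFn {P : Type} [DecidableEq P] (Γ : AccessStructure P)
    (f : Finset P → ℝ) : Prop :=
  f ∅ = 0 ∧
  (∀ A B : Finset P, A ⊆ B → f A ≤ f B) ∧
  (∀ A B : Finset P, f (A ∩ B) + f (A ∪ B) ≤ f A + f B) ∧
  (∀ A B : Finset P, A ⊆ B → ¬ Γ.Qualified A → Γ.Qualified B → f A + 1 ≤ f B) ∧
  (∀ A B : Finset P, Γ.Qualified A → Γ.Qualified B → ¬ Γ.Qualified (A ∩ B) →
    f (A ∩ B) + f (A ∪ B) + 1 ≤ f A + f B)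

/-- The access structure associated with a graph: the minimal qualified sets are
exactly the edges. -/
def graphAS {P : Type} [Fintype P] [DecidableEq P] (G : SimpleGraph P)
    (hne : ∃ a b, G.Adj a b) : AccessStructure P :=
  letI : DecidableRel G.Adj := Classical.decRel _
  { edges := ((Finset.univ : Finset (P × P)).filter fun q => G.Adj q.1 q.2).image
      fun q => {q.1, q.2}
    nonempty := by
      obtain ⟨a, b, hab⟩ := hne
      exact ⟨{a, b}, Finset.mem_image.2
        ⟨(a, b), Finset.mem_filter.2 ⟨Finset.mem_univ _, hab⟩, rfl⟩⟩
    mem_nonempty := by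
      intro E hE
      rcases Finset.mem_image.1 hE with ⟨q, _, rfl⟩
      exact ⟨q.1, by simp⟩
    sperner := by
      intro E hE F hF hEF
      rcases Finset.mem_image.1 hE with ⟨q, hq, rfl⟩
      rcases Finset.mem_image.1 hF with ⟨r, hr, rfl⟩
      have hq' : G.Adj q.1 q.2 := (Finset.mem_filter.1 hq).2
      have hr' : G.Adj r.1 r.2 := (Finset.mem_filter.1 hr).2
      refine Finset.eq_of_subset_of_card_le hEF ?_
      rw [Finset.card_pair hr'.ne, Finset.card_pair hq'.ne] }

/-- The path `P_{m+2}` on the `m + 2` vertices `0, 1, …, m+1` (in this order),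
as an access structure: the minimal qualified sets are the pairs `{i, i+1}`. -/
def pathAS (m : ℕ) : AccessStructure (Fin (m + 2)) where
  edges := (Finset.univ : Finset (Fin (m + 1))).image fun i => {i.castSucc, i.succ}
  nonempty := ⟨_, Finset.mem_image.2 ⟨0, Finset.mem_univ _, rfl⟩⟩
  mem_nonempty := by
    intro E hE
    rcases Finset.mem_image.1 hE with ⟨i, _, rfl⟩
    exact ⟨_, Finset.mem_insert_self _ _⟩
  sperner := by
    intro E hE F hF hEF
    rcases Finset.mem_image.1 hE with ⟨i, _, rfl⟩
    rcases Finset.mem_image.1 hF with ⟨j, _, rfl⟩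
    have h1 := hEF (Finset.mem_insert_self _ _)
    have h2 := hEF (Finset.mem_insert_of_mem (Finset.mem_singleton_self _))
    rw [Finset.mem_insert, Finset.mem_singleton] at h1 h2
    rw [Fin.ext_iff, Fin.ext_iff] at h1 h2
    simp only [Fin.coe_castSucc, Fin.val_succ] at h1 h2
    have : i = j := Fin.ext (by omega)
    subst this; rfl

/-- The cycle `C_{m+3}` on the `m + 3` vertices `0, 1, …, m+2` (in this cyclic
order), as an access structure: the minimal qualified sets are the pairs
`{i, i+1}` together with `{0, m+2}`. -/
def cycleAS (m : ℕ) : AccessStructure (Fin (m + 3)) where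
  edges := ((Finset.univ : Finset (Fin (m + 2))).image fun i => {i.castSucc, i.succ}) ∪
    {({0, Fin.last (m + 2)} : Finset (Fin (m + 3)))}
  nonempty := ⟨_, Finset.mem_union_right _ (Finset.mem_singleton_self _)⟩
  mem_nonempty := by
    intro E hE
    rcases Finset.mem_union.1 hE with hE | hE
    · rcases Finset.mem_image.1 hE with ⟨i, _, rfl⟩
      exact ⟨_, Finset.mem_insert_self _ _⟩
    · rw [Finset.mem_singleton.1 hE]
      exact ⟨_, Finset.mem_insert_self _ _⟩
  sperner := by
    intro E hE F hF hEF
    rcases Finset.mem_union.1 hE with hE | hE <;>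
      rcases Finset.mem_union.1 hF with hF | hF
    · rcases Finset.mem_image.1 hE with ⟨i, _, rfl⟩
      rcases Finset.mem_image.1 hF with ⟨j, _, rfl⟩
      have h1 := hEF (Finset.mem_insert_self _ _)
      have h2 := hEF (Finset.mem_insert_of_mem (Finset.mem_singleton_self _))
      rw [Finset.mem_insert, Finset.mem_singleton] at h1 h2
      rw [Fin.ext_iff, Fin.ext_iff] at h1 h2
      simp only [Fin.coe_castSucc, Fin.val_succ] at h1 h2
      have : i = j := Fin.ext (by omega)
      subst this; rfl
    · exfalso
      rcases Finset.mem_image.1 hE with ⟨i, _, rfl⟩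
      rw [Finset.mem_singleton.1 hF] at hEF
      have h1 := hEF (Finset.mem_insert_self _ _)
      have h2 := hEF (Finset.mem_insert_of_mem (Finset.mem_singleton_self _))
      rw [Finset.mem_insert, Finset.mem_singleton] at h1 h2
      rw [Fin.ext_iff, Fin.ext_iff] at h1 h2
      simp only [Fin.coe_castSucc, Fin.val_succ, Fin.val_zero, Fin.val_last] at h1 h2
      have := i.2
      omega
    · exfalso
      rcases Finset.mem_image.1 hF with ⟨j, _, rfl⟩
      rw [Finset.mem_singleton.1 hE] at hEF
      have h1 := hEF (Finset.mem_insert_self _ _)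
      have h2 := hEF (Finset.mem_insert_of_mem (Finset.mem_singleton_self _))
      rw [Finset.mem_insert, Finset.mem_singleton] at h1 h2
      rw [Fin.ext_iff, Fin.ext_iff] at h1 h2
      simp only [Fin.coe_castSucc, Fin.val_succ, Fin.val_zero, Fin.val_last] at h1 h2
      have := j.2
      omega
    · rw [Finset.mem_singleton.1 hE, Finset.mem_singleton.1 hF]

/-- The vertex set of the graph `G(d,m)`: a center (`none`), `d` star leaves
(`some (inl i)`) and `m` isolated vertices (`some (inr j)`). -/
abbrev StarVertex (d m : ℕ) : Type := Option (Fin d ⊕ Fin m)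

/-- The center of the star in the graph `G(d,m)`. -/
def starCenter (d m : ℕ) : StarVertex d m := none

/-- The graph `G(d,m)`: a star with `d` edges together with `m` isolated
vertices, as an access structure. -/
def starAS (d m : ℕ) (hd : 1 ≤ d) : AccessStructure (StarVertex d m) where
  edges := (Finset.univ : Finset (Fin d)).image fun i =>
    {starCenter d m, some (Sum.inl i)}
  nonempty := ⟨_, Finset.mem_image.2 ⟨⟨0, by omega⟩, Finset.mem_univ _, rfl⟩⟩
  mem_nonempty := by
    intro E hE
    rcases Finset.mem_image.1 hE with ⟨i, _, rfl⟩
    exact ⟨_, Finset.mem_insert_self _ _⟩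
  sperner := by
    intro E hE F hF hEF
    rcases Finset.mem_image.1 hE with ⟨i, _, rfl⟩
    rcases Finset.mem_image.1 hF with ⟨j, _, rfl⟩
    have h2 := hEF (Finset.mem_insert_of_mem (Finset.mem_singleton_self _))
    rw [Finset.mem_insert, Finset.mem_singleton] at h2
    rcases h2 with h | h
    · exact absurd h (by simp [starCenter])
    · simp only [Option.some.injEq, Sum.inl.injEq] at h
      subst h; rfl

/-- The substructure of `Γ` induced by `S` (assuming it contains at least one
hyperedge), as an access structure on the subtype `S`. -/
def inducedAS {P : Type} [DecidableEq P] (Γ : AccessStructure P) (S : Finset P)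
    (h : ∃ E ∈ Γ.edges, E ⊆ S) : AccessStructure {x : P // x ∈ S} where
  edges := (Γ.edges.filter fun E => E ⊆ S).image fun E => E.subtype fun x => x ∈ S
  nonempty := by
    obtain ⟨E, hE, hES⟩ := h
    exact ⟨_, Finset.mem_image.2 ⟨E, Finset.mem_filter.2 ⟨hE, hES⟩, rfl⟩⟩
  mem_nonempty := by
    intro E' hE'
    rcases Finset.mem_image.1 hE' with ⟨E, hE, rfl⟩
    have hE1 := (Finset.mem_filter.1 hE).1
    have hES := (Finset.mem_filter.1 hE).2
    obtain ⟨a, ha⟩ := Γ.mem_nonempty E hE1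
    exact ⟨⟨a, hES ha⟩, Finset.mem_subtype.2 ha⟩
  sperner := by
    intro E' hE' F' hF' hEF
    rcases Finset.mem_image.1 hE' with ⟨E, hE, rfl⟩
    rcases Finset.mem_image.1 hF' with ⟨F, hF, rfl⟩
    have hE1 := (Finset.mem_filter.1 hE).1
    have hF1 := (Finset.mem_filter.1 hF).1
    have hES := (Finset.mem_filter.1 hE).2
    have hsub : E ⊆ F := by
      intro a ha
      exact Finset.mem_subtype.1 (hEF (Finset.mem_subtype.2 ha : (⟨a, hES ha⟩ :
        {x : P // x ∈ S}) ∈ E.subtype fun x => x ∈ S))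
    rw [Γ.sperner E hE1 F hF1 hsub]

/-- Subadditivity of `negMulLog` for a grouped family. -/
lemma negMulLog_le_sum_aux {ι : Type*} (s : Finset ι) (a : ι → ℝ) (u : ℝ)
    (h0u : 0 ≤ u) (hu1 : u ≤ 1) (h0 : ∀ i ∈ s, 0 ≤ a i)
    (hle : ∀ i ∈ s, a i ≤ u) (hsum : u ≤ ∑ i ∈ s, a i) :
    Real.negMulLog u ≤ ∑ i ∈ s, Real.negMulLog (a i) := by
  rcases eq_or_lt_of_le h0u with h | h
  · rw [← h, Real.negMulLog_zero]
    refine Finset.sum_nonneg fun i hi => ?_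
    have := hle i hi
    have := h0 i hi
    have hai : a i = 0 := le_antisymm (by linarith [hle i hi, h.symm]) (h0 i hi)
    simp [hai]
  · have hlogu : Real.log u ≤ 0 := Real.log_nonpos (le_of_lt h) hu1
    calc Real.negMulLog u = u * (-Real.log u) := by
          simp [Real.negMulLog]
      _ ≤ (∑ i ∈ s, a i) * (-Real.log u) := by
          exact mul_le_mul_of_nonneg_right hsum (by linarith)
      _ = ∑ i ∈ s, a i * (-Real.log u) := Finset.sum_mul _ _ _
      _ ≤ ∑ i ∈ s, Real.negMulLog (a i) := by
          refine Finset.sum_le_sum fun i hi => ?_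
          rcases eq_or_lt_of_le (h0 i hi) with h' | h'
          · simp [← h', Real.negMulLog_zero]
          · have : Real.log (a i) ≤ Real.log u := Real.log_le_log h' (hle i hi)
            have : -Real.log u ≤ -Real.log (a i) := by linarith
            calc a i * (-Real.log u) ≤ a i * (-Real.log (a i)) :=
                  mul_le_mul_of_nonneg_left this (le_of_lt h')
              _ = Real.negMulLog (a i) := by simp [Real.negMulLog]

/-- Entropy only depends on the a.e. class. -/
lemma H_congr_ae {Ω : Type*} [MeasurableSpace Ω] (μ : Measure Ω) {S : Type*}
    [Fintype S] {X Y : Ω → S} (h : X =ᵐ[μ] Y) : H μ X = H μ Y := by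
  unfold H
  refine Finset.sum_congr rfl fun s _ => ?_
  have hN : μ {ω | X ω ≠ Y ω} = 0 := by
    simpa [Filter.EventuallyEq, ae_iff] using h
  have key : ∀ (U V : Ω → S), μ {ω | U ω ≠ V ω} = 0 →
      μ (U ⁻¹' {s}) ≤ μ (V ⁻¹' {s}) := by
    intro U V hUV
    calc μ (U ⁻¹' {s}) ≤ μ (V ⁻¹' {s} ∪ {ω | U ω ≠ V ω}) := by
          refine measure_mono fun ω hω => ?_
          by_cases hxy : U ω = V ω
          · exact Or.inl (by simpa [← hxy] using hω)
          · exact Or.inr hxy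
      _ ≤ μ (V ⁻¹' {s}) + μ {ω | U ω ≠ V ω} := measure_union_le _ _
      _ = μ (V ⁻¹' {s}) := by rw [hUV, add_zero]
  have hN' : μ {ω | Y ω ≠ X ω} = 0 := by
    convert hN using 2; ext ω; exact ne_comm
  rw [le_antisymm (key X Y hN) (key Y X hN')]

/-- Entropy does not increase under composition with a function. -/
lemma H_comp_le {Ω : Type*} [MeasurableSpace Ω] (μ : Measure Ω)
    [IsProbabilityMeasure μ] {S T : Type*} [Fintype S] [Fintype T]
    (X : Ω → S) (g : S → T) [DecidableEq T] : H μ (g ∘ X) ≤ H μ X := by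
  unfold H
  rw [← Finset.sum_fiberwise_of_maps_to (fun s (_ : s ∈ Finset.univ) =>
    Finset.mem_univ (g s)) (fun s => Real.negMulLog (μ (X ⁻¹' {s})).toReal)]
  refine Finset.sum_le_sum fun t _ => ?_
  have hfin : ∀ (W : Set Ω), μ W ≠ ⊤ := fun W => (measure_lt_top μ W).ne
  refine negMulLog_le_sum_aux _ _ _ ENNReal.toReal_nonneg ?_ (fun _ _ =>
    ENNReal.toReal_nonneg) ?_ ?_
  · exact ENNReal.toReal_le_of_le_ofReal one_pos.le (by simpa using prob_le_one)
  · intro s hs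
    have hgs : g s = t := (Finset.mem_filter.1 hs).2
    refine ENNReal.toReal_le_toReal (hfin _) (hfin _) |>.2 ?_
    refine measure_mono fun ω hω => ?_
    simp only [Set.mem_preimage, Set.mem_singleton_iff] at hω ⊢
    rw [Function.comp_apply, hω, hgs]
  · have hsub : (g ∘ X) ⁻¹' {t} ⊆
        ⋃ s ∈ Finset.univ.filter (fun s => g s = t), X ⁻¹' {s} := by
      intro ω hω
      simp only [Set.mem_preimage, Set.mem_singleton_iff, Function.comp_apply] at hω
      exact Set.mem_biUnion (Finset.mem_filter.2 ⟨Finset.mem_univ _, hω⟩) rfl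
    calc (μ ((g ∘ X) ⁻¹' {t})).toReal
        ≤ (∑ s ∈ Finset.univ.filter (fun s => g s = t), μ (X ⁻¹' {s})).toReal := by
          refine ENNReal.toReal_le_toReal (hfin _) (ENNReal.sum_ne_top.2 fun _ _ => hfin _)
            |>.2 ((measure_mono hsub).trans (measure_biUnion_finset_le _ _))
      _ = ∑ s ∈ Finset.univ.filter (fun s => g s = t), (μ (X ⁻¹' {s})).toReal :=
          ENNReal.toReal_sum fun _ _ => hfin _

/-- The total (outer) mass of the fibers of a finitely-valued map is at least 1. -/
lemma one_le_sum_fiber_measures {Ω : Type*} [MeasurableSpace Ω] (μ : Measure Ω)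
    [IsProbabilityMeasure μ] {S : Type*} [Fintype S] (X : Ω → S) :
    1 ≤ ∑ s : S, (μ (X ⁻¹' {s})).toReal := by
  have hfin : ∀ (W : Set Ω), μ W ≠ ⊤ := fun W => (measure_lt_top μ W).ne
  have hcov : (Set.univ : Set Ω) ⊆ ⋃ s ∈ (Finset.univ : Finset S), X ⁻¹' {s} :=
    fun ω _ => Set.mem_biUnion (Finset.mem_univ (X ω)) rfl
  have h1 : (1 : ℝ≥0∞) ≤ ∑ s : S, μ (X ⁻¹' {s}) := by
    calc (1 : ℝ≥0∞) = μ Set.univ := (measure_univ (μ := μ)).symm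
      _ ≤ ∑ s : S, μ (X ⁻¹' {s}) := (measure_mono hcov).trans
          (measure_biUnion_finset_le _ _)
  calc (1 : ℝ) = (1 : ℝ≥0∞).toReal := by simp
    _ ≤ (∑ s : S, μ (X ⁻¹' {s})).toReal :=
        ENNReal.toReal_le_toReal (by simp) (ENNReal.sum_ne_top.2 fun _ _ => hfin _) |>.2 h1
    _ = ∑ s : S, (μ (X ⁻¹' {s})).toReal := ENNReal.toReal_sum fun _ _ => hfin _

/-- Entropy is nonnegative. -/
lemma H_nonneg {Ω : Type*} [MeasurableSpace Ω] (μ : Measure Ω)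
    [IsProbabilityMeasure μ] {S : Type*} [Fintype S] (X : Ω → S) : 0 ≤ H μ X := by
  refine Finset.sum_nonneg fun s _ => Real.negMulLog_nonneg ENNReal.toReal_nonneg ?_
  exact ENNReal.toReal_le_of_le_ofReal one_pos.le (by simpa using prob_le_one)

/-- strict monotonicity, rule (d) of the entropy method.
If the joint share of `A` is independent of the secret while the joint share of
`B ⊇ A` determines it, the joint entropy goes up by at least the entropy of the
secret. -/
theorem statement0 {Ω P : Type} [MeasurableSpace Ω] (μ : Measure Ω)
    [IsProbabilityMeasure μ] [DecidableEq P]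
    {Sec : Type} [Fintype Sec] (ξs : Ω → Sec)
    {S : P → Type} [∀ p, Fintype (S p)] (ξ : (p : P) → Ω → S p)
    (A B : Finset P) (hAB : A ⊆ B)
    (hind : IndepRV μ (joint ξ A) ξs)
    (hdet : DeterminedBy μ ξs (joint ξ B)) :
    H μ (joint ξ A) + H μ ξs ≤ H μ (joint ξ B) := by
  classical
  obtain ⟨f, hf⟩ := hdet
  set V : Ω → ((p : A) → S (p : P)) × Sec := fun ω => (joint ξ A ω, ξs ω) with hV
  set r : ((p : B) → S (p : P)) → ((p : A) → S (p : P)) :=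
    fun b p => b ⟨(p : P), hAB p.2⟩ with hr
  set k : ((p : B) → S (p : P)) → ((p : A) → S (p : P)) × Sec :=
    fun b => (r b, f b) with hk
  have hae : V =ᵐ[μ] (k ∘ joint ξ B) := by
    filter_upwards [hf] with ω hω
    simp only [hV, hk, hr, Function.comp_apply, Prod.mk.injEq]
    exact ⟨rfl, hω⟩
  have h1 : H μ V = H μ (k ∘ joint ξ B) := H_congr_ae μ hae
  have h2 : H μ (k ∘ joint ξ B) ≤ H μ (joint ξ B) := H_comp_le μ _ k
  have hpre : ∀ (a : (p : A) → S (p : P)) (t : Sec),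
      V ⁻¹' {(a, t)} = joint ξ A ⁻¹' {a} ∩ ξs ⁻¹' {t} := by
    intro a t
    ext ω
    simp [hV, Prod.ext_iff]
  have hHV : H μ V = (∑ t : Sec, (μ (ξs ⁻¹' {t})).toReal) * H μ (joint ξ A)
      + (∑ a : (p : A) → S (p : P), (μ (joint ξ A ⁻¹' {a})).toReal) * H μ ξs := by
    unfold H
    rw [Fintype.sum_prod_type]
    calc ∑ a : (p : A) → S (p : P), ∑ t : Sec,
          Real.negMulLog (μ (V ⁻¹' {(a, t)})).toReal
        = ∑ a : (p : A) → S (p : P), ∑ t : Sec,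
            ((μ (ξs ⁻¹' {t})).toReal *
              Real.negMulLog (μ (joint ξ A ⁻¹' {a})).toReal
            + (μ (joint ξ A ⁻¹' {a})).toReal *
              Real.negMulLog (μ (ξs ⁻¹' {t})).toReal) := by
          refine Finset.sum_congr rfl fun a _ => Finset.sum_congr rfl fun t _ => ?_
          rw [hpre, hind a t, ENNReal.toReal_mul, Real.negMulLog_mul]
      _ = _ := by
          simp only [Finset.sum_add_distrib, ← Finset.sum_mul, ← Finset.mul_sum]
  have hq : 1 ≤ ∑ t : Sec, (μ (ξs ⁻¹' {t})).toReal := one_le_sum_fiber_measures μ ξs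
  have hp : 1 ≤ ∑ a : (p : A) → S (p : P), (μ (joint ξ A ⁻¹' {a})).toReal :=
    one_le_sum_fiber_measures μ _
  have hA0 := H_nonneg μ (joint ξ A)
  have hs0 := H_nonneg μ ξs
  nlinarith [mul_le_mul_of_nonneg_right hq hA0, mul_le_mul_of_nonneg_right hp hs0]

end

end OnlineSecretSharing
end

section
/- Let G be a finite graph with at least one edge, let k ≥ 1 be an integer, and let S be a star k-cover of G of weight w. Then there exists a perfect secret sharing scheme realizing the access structure given by the edges of G whose complexity is at most w/k; consequently σ(G) ≤ w/k. -/
open MeasureTheory Finset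
open scoped ENNReal

namespace OnlineSecretSharing

noncomputable section

/-! ### Auxiliary machinery for Statement 2 -/

def uniμ (Ω : Type) [Fintype Ω] [MeasurableSpace Ω] : Measure Ω :=
  (Fintype.card Ω : ℝ≥0∞)⁻¹ • Measure.count

lemma uniμ_apply {Ω : Type} [Fintype Ω] [MeasurableSpace Ω]
    (hm : ∀ s : Set Ω, MeasurableSet s) (S : Set Ω) :
    uniμ Ω S = (Nat.card S : ℝ≥0∞) / (Fintype.card Ω : ℝ≥0∞) := by
  haveI : MeasurableSingletonClass Ω := ⟨fun _ => hm _⟩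
  have hfin : S.Finite := S.toFinite
  rw [uniμ, Measure.smul_apply, Measure.count_apply_finite S hfin, smul_eq_mul,
    ENNReal.div_eq_inv_mul]
  congr 2
  rw [Nat.card_coe_set_eq, Set.ncard_eq_toFinset_card S hfin]

lemma uniμ_isProb {Ω : Type} [Fintype Ω] [Nonempty Ω] [MeasurableSpace Ω]
    (hm : ∀ s : Set Ω, MeasurableSet s) : IsProbabilityMeasure (uniμ Ω) := by
  constructor
  rw [uniμ_apply hm]
  have h1 : Nat.card (Set.univ : Set Ω) = Fintype.card Ω := by
    rw [Nat.card_congr (Equiv.Set.univ Ω), Nat.card_eq_fintype_card]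
  rw [h1]
  exact ENNReal.div_self (by exact_mod_cast Fintype.card_ne_zero) (by simp)

lemma card_partition {Ω : Type} [Fintype Ω] {S : Type} [Fintype S] (X : Ω → S) :
    Fintype.card Ω = ∑ y : S, Nat.card {ω // X ω = y} := by
  classical
  rw [← Nat.card_eq_fintype_card (α := Ω),
    ← Nat.card_congr (Equiv.sigmaFiberEquiv X), Nat.card_eq_fintype_card,
    Fintype.card_sigma]
  exact Finset.sum_congr rfl fun y _ => (Nat.card_eq_fintype_card).symm

lemma nat_card_partition {Ω : Type} [Fintype Ω] {T : Type} [Fintype T]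
    (p : Ω → Prop) (Y : Ω → T) :
    Nat.card {ω // p ω} = ∑ t, Nat.card {ω // p ω ∧ Y ω = t} := by
  classical
  rw [Nat.card_congr (Equiv.sigmaFiberEquiv (fun u : {ω // p ω} => Y u.1)).symm,
    Nat.card_eq_fintype_card, Fintype.card_sigma]
  refine Finset.sum_congr rfl fun t _ => ?_
  rw [← Nat.card_eq_fintype_card]
  exact Nat.card_congr (Equiv.subtypeSubtypeEquivSubtypeInter p (fun ω => Y ω = t))

lemma nat_card_preimage {Ω : Type} {S : Type} (X : Ω → S) (y : S) :
    Nat.card (X ⁻¹' {y} : Set Ω) = Nat.card {ω // X ω = y} :=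
  Nat.card_congr (Equiv.subtypeEquivRight (fun ω => by simp [Set.mem_preimage]))

lemma uniμ_fiber {Ω S : Type} [Fintype Ω] [Nonempty Ω] [Fintype S] [MeasurableSpace Ω]
    (hm : ∀ s : Set Ω, MeasurableSet s) (X : Ω → S) (n : ℕ)
    (h : ∀ y, Nat.card {ω // X ω = y} = n) (y : S) :
    uniμ Ω (X ⁻¹' {y}) = (Fintype.card S : ℝ≥0∞)⁻¹ := by
  have hΩ : Fintype.card Ω = n * Fintype.card S := by
    rw [card_partition X]; simp [h, mul_comm]
  have hn : n ≠ 0 := by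
    intro h0
    rw [h0, zero_mul] at hΩ
    have := Fintype.card_pos (α := Ω)
    omega
  rw [uniμ_apply hm, nat_card_preimage, h y, hΩ, Nat.cast_mul]
  rw [ENNReal.div_eq_inv_mul, ENNReal.mul_inv (Or.inl (by exact_mod_cast hn)) (Or.inl (by simp)),
    mul_comm ((n : ℝ≥0∞))⁻¹, mul_assoc, ENNReal.inv_mul_cancel (by exact_mod_cast hn) (by simp),
    mul_one]

lemma H_balanced {Ω S : Type} [Fintype Ω] [Nonempty Ω] [Fintype S] [MeasurableSpace Ω]
    (hm : ∀ s : Set Ω, MeasurableSet s) (X : Ω → S) (n : ℕ)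
    (h : ∀ y, Nat.card {ω // X ω = y} = n) :
    H (uniμ Ω) X = Real.log (Fintype.card S) := by
  have hS : (0:ℝ) < Fintype.card S := by
    have : Nonempty S := ⟨X (Classical.arbitrary Ω)⟩
    exact_mod_cast Fintype.card_pos
  unfold H
  have hfib : ∀ y : S, (uniμ Ω (X ⁻¹' {y})).toReal = ((Fintype.card S : ℝ))⁻¹ := by
    intro y
    rw [uniμ_fiber hm X n h y]
    simp
  rw [Finset.sum_congr rfl (fun y _ => by rw [hfib y])]
  rw [Finset.sum_const, Finset.card_univ, nsmul_eq_mul]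
  rw [Real.negMulLog, Real.log_inv]
  field_simp

lemma H_comp_inj {Ω : Type} [MeasurableSpace Ω] (μ : Measure Ω) {S S' : Type}
    [Fintype S] [Fintype S'] (X : Ω → S') (g : S' → S) (hg : Function.Injective g) :
    H μ (g ∘ X) = H μ X := by
  classical
  unfold H
  have h1 : ∑ s : S, Real.negMulLog (μ ((g ∘ X) ⁻¹' {s})).toReal
      = ∑ s ∈ Finset.univ.image g, Real.negMulLog (μ ((g ∘ X) ⁻¹' {s})).toReal := by
    refine (Finset.sum_subset (Finset.subset_univ _) fun s _ hs => ?_).symm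
    have : (g ∘ X) ⁻¹' {s} = ∅ := by
      ext ω
      simp only [Set.mem_preimage, Set.mem_singleton_iff, Set.mem_empty_iff_false,
        iff_false, Function.comp_apply]
      intro hω
      exact hs (Finset.mem_image.2 ⟨X ω, Finset.mem_univ _, hω⟩)
    rw [this]
    simp
  rw [h1, Finset.sum_image (fun x _ y _ hxy => hg hxy)]
  refine Finset.sum_congr rfl fun s' _ => ?_
  have hset : (g ∘ X) ⁻¹' {g s'} = X ⁻¹' {s'} := by
    ext ω
    simp only [Set.mem_preimage, Set.mem_singleton_iff, Function.comp_apply]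
    exact ⟨fun hω => hg hω, fun hω => by rw [hω]⟩
  rw [hset]

lemma indepRV_of_card {Ω S T : Type} [Fintype Ω] [Nonempty Ω] [Fintype S] [Fintype T]
    [MeasurableSpace Ω] (hm : ∀ s : Set Ω, MeasurableSet s) (X : Ω → S) (Y : Ω → T)
    (h : ∀ (x : S) (t t' : T), Nat.card {ω // X ω = x ∧ Y ω = t}
        = Nat.card {ω // X ω = x ∧ Y ω = t'}) :
    IndepRV (uniμ Ω) X Y := by
  classical
  intro x t
  set cT : ℕ := Fintype.card T with hcT
  set a : ℕ := Nat.card {ω // X ω = x ∧ Y ω = t} with ha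
  set m : ℕ := ∑ x' : S, Nat.card {ω // X ω = x' ∧ Y ω = t} with hmdef
  have hsum : ∀ x' : S, ∑ t' : T, Nat.card {ω // X ω = x' ∧ Y ω = t'}
      = cT * Nat.card {ω // X ω = x' ∧ Y ω = t} := by
    intro x'
    rw [Finset.sum_congr rfl fun t' _ => (h x' t t').symm]
    simp [hcT, mul_comm]
  have hXfib : ∀ x' : S, Nat.card (X ⁻¹' {x'} : Set Ω)
      = cT * Nat.card {ω // X ω = x' ∧ Y ω = t} := by
    intro x'
    rw [nat_card_preimage, nat_card_partition (fun ω => X ω = x') Y, hsum]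
  have hYfib : Nat.card (Y ⁻¹' {t} : Set Ω) = m := by
    rw [nat_card_preimage, hmdef]
    rw [nat_card_partition (fun ω => Y ω = t) X]
    exact Finset.sum_congr rfl fun x' _ =>
      Nat.card_congr (Equiv.subtypeEquivRight (fun ω => and_comm))
  have hcap : Nat.card (X ⁻¹' {x} ∩ Y ⁻¹' {t} : Set Ω) = a := by
    rw [ha]
    exact Nat.card_congr (Equiv.subtypeEquivRight (fun ω => by
      simp [Set.mem_preimage]))
  have hΩcard : Fintype.card Ω = cT * m := by
    rw [card_partition X, hmdef, Finset.mul_sum]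
    exact Finset.sum_congr rfl fun x' _ => by
      rw [← hXfib x', nat_card_preimage]
  have hm0 : m ≠ 0 := by
    intro h0
    rw [h0, mul_zero] at hΩcard
    have := Fintype.card_pos (α := Ω)
    omega
  have hcT0' : cT ≠ 0 := by
    have : Nonempty T := ⟨t⟩
    simp [hcT, Fintype.card_ne_zero]
  have hcT0 : (cT : ℝ≥0∞) ≠ 0 := by exact_mod_cast hcT0'
  have hcTtop : (cT : ℝ≥0∞) ≠ ⊤ := by simp
  have hm0' : (m : ℝ≥0∞) ≠ 0 := by exact_mod_cast hm0
  have hmtop : (m : ℝ≥0∞) ≠ ⊤ := by simp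
  rw [uniμ_apply hm, uniμ_apply hm, uniμ_apply hm, hcap, hXfib x, hYfib, hΩcard, ← ha]
  push_cast
  rw [div_eq_mul_inv, div_eq_mul_inv, div_eq_mul_inv,
    ENNReal.mul_inv (Or.inl hcT0) (Or.inl hcTtop)]
  have h1 : (cT : ℝ≥0∞) * (cT : ℝ≥0∞)⁻¹ = 1 := ENNReal.mul_inv_cancel hcT0 hcTtop
  have h2 : (m : ℝ≥0∞) * (m : ℝ≥0∞)⁻¹ = 1 := ENNReal.mul_inv_cancel hm0' hmtop
  calc (a : ℝ≥0∞) * ((cT : ℝ≥0∞)⁻¹ * (m : ℝ≥0∞)⁻¹)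
      = ((cT : ℝ≥0∞) * (cT : ℝ≥0∞)⁻¹) * (((m : ℝ≥0∞)) * (m : ℝ≥0∞)⁻¹)
        * ((a : ℝ≥0∞) * ((cT : ℝ≥0∞)⁻¹ * (m : ℝ≥0∞)⁻¹)) := by rw [h1, h2]; ring
    _ = (cT : ℝ≥0∞) * (a:ℝ≥0∞) * ((cT : ℝ≥0∞)⁻¹ * (m : ℝ≥0∞)⁻¹)
        * ((m:ℝ≥0∞) * ((cT : ℝ≥0∞)⁻¹ * (m : ℝ≥0∞)⁻¹)) := by ring


section StarScheme

variable {P : Type} [Fintype P] [DecidableEq P] {ι : Type} [Fintype ι] [DecidableEq ι]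
set_option linter.unusedSectionVars false

def vval {ι : Type} [Fintype ι] {q : ℕ} (x : ι → ZMod q) {k : ℕ}
    (s : Fin k → ZMod q) (i : ι) : ZMod q :=
  ∑ m : Fin k, (x i) ^ (m : ℕ) * s m

lemma vval_zero {ι : Type} [Fintype ι] {q : ℕ} (x : ι → ZMod q) {k : ℕ} (i : ι) :
    vval x (0 : Fin k → ZMod q) i = 0 := by simp [vval]

def shF (st : ι → P × Finset P) {q : ℕ} (x : ι → ZMod q) {k : ℕ} (p : P)
    (ω : (ι → ZMod q) × (Fin k → ZMod q)) (i : ι) : ZMod q :=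
  if p = (st i).1 then ω.1 i
  else if p ∈ (st i).2 then ω.1 i + vval x ω.2 i else 0

def sh'F (st : ι → P × Finset P) {q : ℕ} (x : ι → ZMod q) {k : ℕ} (p : P)
    (ω : (ι → ZMod q) × (Fin k → ZMod q))
    (j : {i : ι // p = (st i).1 ∨ p ∈ (st i).2}) : ZMod q :=
  if p = (st j.1).1 then ω.1 j.1 else ω.1 j.1 + vval x ω.2 j.1

def gP (st : ι → P × Finset P) (q : ℕ) (p : P)
    (z : {i : ι // p = (st i).1 ∨ p ∈ (st i).2} → ZMod q) (i : ι) : ZMod q :=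
  if h : (p = (st i).1 ∨ p ∈ (st i).2) then z ⟨i, h⟩ else 0

lemma gP_inj (st : ι → P × Finset P) (q : ℕ) (p : P) :
    Function.Injective (gP st q p) := by
  intro z z' h
  funext j
  have := congrFun h j.1
  rwa [gP, gP, dif_pos j.2, dif_pos j.2] at this

lemma shF_eq (st : ι → P × Finset P) {q : ℕ} (x : ι → ZMod q) {k : ℕ} (p : P) :
    shF st x (k := k) p = fun ω => gP st q p (sh'F st x p ω) := by
  funext ω i
  rw [shF, gP]
  by_cases h : (p = (st i).1 ∨ p ∈ (st i).2)
  · rw [dif_pos h, sh'F]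
    dsimp only
    by_cases h1 : p = (st i).1
    · rw [if_pos h1, if_pos h1]
    · rw [if_neg h1, if_neg h1, if_pos (h.resolve_left h1)]
  · push_neg at h
    rw [dif_neg, if_neg h.1, if_neg h.2]
    push_neg
    exact h

def fiberEquiv (st : ι → P × Finset P) {q : ℕ} [NeZero q] (x : ι → ZMod q) {k : ℕ} (p : P)
    (y : {i : ι // p = (st i).1 ∨ p ∈ (st i).2} → ZMod q) :
    {ω : (ι → ZMod q) × (Fin k → ZMod q) // sh'F st x p ω = y} ≃
      ({i : ι // ¬(p = (st i).1 ∨ p ∈ (st i).2)} → ZMod q) × (Fin k → ZMod q) where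
  toFun ω := (fun i => ω.1.1 i.1, ω.1.2)
  invFun g := ⟨(fun i => if h : (p = (st i).1 ∨ p ∈ (st i).2) then
      (if p = (st i).1 then y ⟨i, h⟩ else y ⟨i, h⟩ - vval x g.2 i) else g.1 ⟨i, h⟩, g.2), by
    funext j
    rw [sh'F]
    by_cases h1 : p = (st j.1).1
    · rw [if_pos h1]
      dsimp only
      rw [dif_pos j.2, if_pos h1]
    · rw [if_neg h1]
      dsimp only
      rw [dif_pos j.2, if_neg h1, sub_add_cancel]⟩
  left_inv := by
    rintro ⟨⟨r, s⟩, hω⟩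
    refine Subtype.ext (Prod.ext ?_ rfl)
    funext i
    dsimp only
    by_cases h : (p = (st i).1 ∨ p ∈ (st i).2)
    · rw [dif_pos h]
      have := congrFun hω ⟨i, h⟩
      rw [sh'F] at this
      by_cases h1 : p = (st i).1
      · rw [if_pos h1]
        rw [if_pos h1] at this
        exact this.symm
      · rw [if_neg h1]
        rw [if_neg h1] at this
        rw [← this, add_sub_cancel_right]
    · rw [dif_neg h]
  right_inv := by
    rintro ⟨g1, g2⟩
    refine Prod.ext ?_ rfl
    funext i
    dsimp only
    rw [dif_neg i.2]

lemma sh'F_balanced (st : ι → P × Finset P) {q : ℕ} [NeZero q] (x : ι → ZMod q) {k : ℕ} (p : P)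
    (y : {i : ι // p = (st i).1 ∨ p ∈ (st i).2} → ZMod q) :
    Nat.card {ω : (ι → ZMod q) × (Fin k → ZMod q) // sh'F st x p ω = y}
      = Nat.card (({i : ι // ¬(p = (st i).1 ∨ p ∈ (st i).2)} → ZMod q) × (Fin k → ZMod q)) :=
  Nat.card_congr (fiberEquiv st x p y)

def secEquiv (ι : Type) [Fintype ι] [DecidableEq ι] (q k : ℕ) (s : Fin k → ZMod q) :
    {ω : (ι → ZMod q) × (Fin k → ZMod q) // ω.2 = s} ≃ (ι → ZMod q) where
  toFun ω := ω.1.1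
  invFun r := ⟨(r, s), rfl⟩
  left_inv := by rintro ⟨⟨r, s'⟩, rfl⟩; rfl
  right_inv r := rfl

lemma H_secF (ι : Type) [Fintype ι] [DecidableEq ι] (q : ℕ) [NeZero q] (k : ℕ)
    [MeasurableSpace ((ι → ZMod q) × (Fin k → ZMod q))]
    (hm : ∀ s : Set ((ι → ZMod q) × (Fin k → ZMod q)), MeasurableSet s) :
    H (uniμ ((ι → ZMod q) × (Fin k → ZMod q)))
      (Prod.snd : (ι → ZMod q) × (Fin k → ZMod q) → (Fin k → ZMod q))
      = (k : ℝ) * Real.log q := by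
  rw [H_balanced hm _ (Fintype.card (ι → ZMod q))
    (fun s => Nat.card_congr (secEquiv ι q k s) |>.trans Nat.card_eq_fintype_card)]
  classical
  rw [Fintype.card_fun, ZMod.card, Fintype.card_fin]
  push_cast
  rw [Real.log_pow]

lemma H_shF (st : ι → P × Finset P) {q : ℕ} [NeZero q] (x : ι → ZMod q) (k : ℕ) (p : P)
    [MeasurableSpace ((ι → ZMod q) × (Fin k → ZMod q))]
    (hm : ∀ s : Set ((ι → ZMod q) × (Fin k → ZMod q)), MeasurableSet s) :
    H (uniμ ((ι → ZMod q) × (Fin k → ZMod q))) (shF st x (k := k) p)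
      = (Fintype.card {i : ι // p = (st i).1 ∨ p ∈ (st i).2} : ℝ) * Real.log q := by
  rw [shF_eq st x p]
  have := H_comp_inj (uniμ ((ι → ZMod q) × (Fin k → ZMod q)))
    (sh'F st x (k := k) p) (gP st q p) (gP_inj st q p)
  rw [show (fun ω => gP st q p (sh'F st x p ω)) = gP st q p ∘ sh'F st x p from rfl, this]
  rw [H_balanced hm _ _ (fun y => sh'F_balanced st x p y)]
  classical
  rw [Fintype.card_fun, ZMod.card]
  push_cast
  rw [Real.log_pow]

end StarScheme


section StarScheme2

variable {P : Type} [Fintype P] [DecidableEq P] {ι : Type} [Fintype ι] [DecidableEq ι]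
set_option linter.unusedSectionVars false

def starScheme (st : ι → P × Finset P) (q : ℕ) [NeZero q] (k : ℕ) (x : ι → ZMod q) :
    Scheme P where
  Ω := (ι → ZMod q) × (Fin k → ZMod q)
  ms := ⊤
  μ := @uniμ _ _ ⊤
  isProb := @uniμ_isProb _ _ ⟨(0, 0)⟩ ⊤ (fun _ => MeasurableSpace.measurableSet_top)
  Sec := Fin k → ZMod q
  sec := Prod.snd
  Sh := fun _ => ι → ZMod q
  sh := fun p => shF st x p

lemma starScheme_determined (st : ι → P × Finset P) (q : ℕ) [Fact q.Prime] [NeZero q]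
    (k : ℕ) (x : ι → ZMod q) (hx : Function.Injective x)
    [MeasurableSpace ((ι → ZMod q) × (Fin k → ZMod q))]
    (G : SimpleGraph P) (hne : ∃ a b, G.Adj a b)
    (hcover : ∀ a b : P, G.Adj a b →
      k ≤ (Finset.univ.filter fun i : ι =>
        ∃ l ∈ (st i).2, ({a, b} : Finset P) = {(st i).1, l}).card)
    (A : Finset P) (hA : (graphAS G hne).Qualified A) :
    DeterminedBy (uniμ ((ι → ZMod q) × (Fin k → ZMod q)))
      (Prod.snd : ((ι → ZMod q) × (Fin k → ZMod q)) → (Fin k → ZMod q))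
      (joint (fun p => shF st x (k := k) p) A) := by
  classical
  obtain ⟨E, hE, hEA⟩ := hA
  simp only [graphAS, Finset.mem_image, Finset.mem_filter] at hE
  obtain ⟨⟨a, b⟩, ⟨-, hab⟩, rfl⟩ := hE
  have hne2 : a ≠ b := G.ne_of_adj hab
  have haA : a ∈ A := hEA (Finset.mem_insert_self _ _)
  have hbA : b ∈ A := hEA (Finset.mem_insert_of_mem (Finset.mem_singleton_self _))
  obtain ⟨C', hC'sub, hC'card⟩ := Finset.exists_subset_card_eq (hcover a b hab)
  have hcard : Fintype.card {i // i ∈ C'} = k := by rw [Fintype.card_coe, hC'card]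
  set e0 : Fin k ≃ {i // i ∈ C'} := (Fintype.equivFinOfCardEq hcard).symm with he0
  set e : Fin k → ι := fun m => (e0 m).1 with he
  have heC : ∀ m, e m ∈ C' := fun m => (e0 m).2
  have einj : Function.Injective e := fun m m' h => e0.injective (Subtype.ext h)
  have hxe : Function.Injective (x ∘ e) := hx.comp einj
  set M : Matrix (Fin k) (Fin k) (ZMod q) := Matrix.vandermonde (x ∘ e) with hM
  have hdet : IsUnit M.det := by
    rw [isUnit_iff_ne_zero]
    intro h0
    rw [hM, Matrix.det_vandermonde_eq_zero_iff] at h0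
    obtain ⟨i, j, hij, hne'⟩ := h0
    exact hne' (hxe hij)
  refine ⟨fun y => M⁻¹.mulVec (fun m =>
      if a = (st (e m)).1 then y ⟨b, hbA⟩ (e m) - y ⟨a, haA⟩ (e m)
      else y ⟨a, haA⟩ (e m) - y ⟨b, hbA⟩ (e m)), ae_of_all _ ?_⟩
  rintro ⟨r, s⟩
  have hu : (fun m =>
      if a = (st (e m)).1
      then joint (fun p => shF st x (k := k) p) A (r, s) ⟨b, hbA⟩ (e m)
        - joint (fun p => shF st x (k := k) p) A (r, s) ⟨a, haA⟩ (e m)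
      else joint (fun p => shF st x (k := k) p) A (r, s) ⟨a, haA⟩ (e m)
        - joint (fun p => shF st x (k := k) p) A (r, s) ⟨b, hbA⟩ (e m))
      = M.mulVec s := by
    funext m
    show (if a = (st (e m)).1
      then shF st x b (r, s) (e m) - shF st x a (r, s) (e m)
      else shF st x a (r, s) (e m) - shF st x b (r, s) (e m)) = M.mulVec s m
    have hiC := hC'sub (heC m)
    rw [Finset.mem_filter] at hiC
    obtain ⟨-, l, hl, hpair⟩ := hiC
    have hvv : M.mulVec s m = vval x s (e m) := by
      simp [hM, Matrix.mulVec, dotProduct, Matrix.vandermonde, vval]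
    have hc_mem : (st (e m)).1 ∈ ({a, b} : Finset P) := by
      rw [hpair]; exact Finset.mem_insert_self _ _
    rcases Finset.mem_insert.1 hc_mem with hca | hcb'
    · -- center is a
      have hbl : b = l := by
        have hb : b ∈ ({(st (e m)).1, l} : Finset P) := by
          rw [← hpair]; exact Finset.mem_insert_of_mem (Finset.mem_singleton_self _)
        rcases Finset.mem_insert.1 hb with h | h
        · exact absurd (h.trans hca) hne2.symm
        · exact Finset.mem_singleton.1 h
      have hsa : shF st x a (r, s) (e m) = r (e m) := by
        rw [shF, if_pos hca.symm]
      have hsb : shF st x b (r, s) (e m) = r (e m) + vval x s (e m) := by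
        rw [shF, if_neg (fun hh : b = (st (e m)).1 => hne2 (hh.trans hca).symm),
          if_pos (hbl ▸ hl)]
      rw [if_pos hca.symm, hsa, hsb, hvv, add_sub_cancel_left]
    · -- center is b
      have hcb : (st (e m)).1 = b := Finset.mem_singleton.1 hcb'
      have hal : a = l := by
        have ha : a ∈ ({(st (e m)).1, l} : Finset P) := by
          rw [← hpair]; exact Finset.mem_insert_self _ _
        rcases Finset.mem_insert.1 ha with h | h
        · exact absurd (h.trans hcb) hne2
        · exact Finset.mem_singleton.1 h
      have hsb : shF st x b (r, s) (e m) = r (e m) := by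
        rw [shF, if_pos hcb.symm]
      have hsa : shF st x a (r, s) (e m) = r (e m) + vval x s (e m) := by
        rw [shF, if_neg (fun hh : a = (st (e m)).1 => hne2 (hh.trans hcb)),
          if_pos (hal ▸ hl)]
      rw [if_neg (fun hh : a = (st (e m)).1 => hne2 (hh.trans hcb)), hsa, hsb, hvv,
        add_sub_cancel_left]
  show s = _
  dsimp only
  rw [hu, Matrix.mulVec_mulVec, Matrix.nonsing_inv_mul M hdet, Matrix.one_mulVec]

lemma starScheme_indep (st : ι → P × Finset P) (q : ℕ) [NeZero q] (k : ℕ)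
    (x : ι → ZMod q) [MeasurableSpace ((ι → ZMod q) × (Fin k → ZMod q))]
    (hm : ∀ s : Set ((ι → ZMod q) × (Fin k → ZMod q)), MeasurableSet s)
    (G : SimpleGraph P) (hne : ∃ a b, G.Adj a b)
    (hstar : ∀ i : ι, ((st i).2).Nonempty ∧ ∀ l ∈ (st i).2, G.Adj (st i).1 l)
    (A : Finset P) (hA : ¬ (graphAS G hne).Qualified A) :
    IndepRV (uniμ ((ι → ZMod q) × (Fin k → ZMod q)))
      (joint (fun p => shF st x (k := k) p) A)
      (Prod.snd : ((ι → ZMod q) × (Fin k → ZMod q)) → (Fin k → ZMod q)) := by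
  classical
  set J := joint (fun p => shF st x (k := k) p) A with hJ
  set δ : (Fin k → ZMod q) → ι → ZMod q :=
    fun s i => if (st i).1 ∈ A then 0 else vval x s i with hδ
  have key : ∀ (r : ι → ZMod q) (s : Fin k → ZMod q), J (r, s) = J (r + δ s, 0) := by
    intro r s
    funext p
    funext i
    show shF st x p.1 (r, s) i = shF st x p.1 (r + δ s, 0) i
    rw [shF, shF]
    by_cases h1 : p.1 = (st i).1
    · rw [if_pos h1, if_pos h1]
      have hmem : (st i).1 ∈ A := h1 ▸ p.2
      show r i = r i + δ s i
      rw [hδ]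
      simp [hmem]
    · rw [if_neg h1, if_neg h1]
      by_cases h2 : p.1 ∈ (st i).2
      · rw [if_pos h2, if_pos h2]
        have hcA : (st i).1 ∉ A := by
          intro hcA
          apply hA
          refine ⟨{(st i).1, p.1}, ?_, ?_⟩
          · have hadj : G.Adj (st i).1 p.1 := (hstar i).2 p.1 h2
            simp only [graphAS, Finset.mem_image, Finset.mem_filter]
            exact ⟨((st i).1, p.1), ⟨Finset.mem_univ _, hadj⟩, rfl⟩
          · rw [Finset.insert_subset_iff, Finset.singleton_subset_iff]
            exact ⟨hcA, p.2⟩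
        show r i + vval x s i = (r i + δ s i) + vval x 0 i
        rw [vval_zero, add_zero, hδ]
        simp [hcA]
      · rw [if_neg h2, if_neg h2]
  refine indepRV_of_card hm _ _ ?_
  intro xv t t'
  have E1 : ∀ t0 : Fin k → ZMod q,
      {ω : (ι → ZMod q) × (Fin k → ZMod q) // J ω = xv ∧ ω.2 = t0}
        ≃ {r : ι → ZMod q // J (r, t0) = xv} := fun t0 =>
    { toFun := fun ω => ⟨ω.1.1, by
        obtain ⟨⟨r, s⟩, h1, h2⟩ := ω
        dsimp only at h2 ⊢
        rwa [h2] at h1⟩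
      invFun := fun r => ⟨(r.1, t0), r.2, rfl⟩
      left_inv := by rintro ⟨⟨r, s⟩, h1, rfl⟩; rfl
      right_inv := fun r => rfl }
  have E2 : {r : ι → ZMod q // J (r, t) = xv} ≃ {r : ι → ZMod q // J (r, t') = xv} := by
    refine Equiv.subtypeEquiv (Equiv.addRight (δ t - δ t')) fun r => ?_
    simp only [Equiv.coe_addRight]
    rw [key r t, key (r + (δ t - δ t')) t']
    have harr : r + (δ t - δ t') + δ t' = r + δ t := by abel
    rw [harr]
  exact Nat.card_congr ((E1 t).trans (E2.trans ((E1 t').symm)))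

end StarScheme2


/-- Stinson's star-cover bound. If a graph `G` with at least
one edge has a star `k`-cover of weight `w`, then some perfect secret sharing
scheme realizes `G` with complexity at most `w / k`; consequently
`σ(G) ≤ w / k`. The stars are given by an indexed family `st`: the star `st i`
has center `(st i).1` and nonempty leaf set `(st i).2` consisting of neighbors
of the center. -/
theorem statement2 {P : Type} [Fintype P] [DecidableEq P] (G : SimpleGraph P)
    (hne : ∃ a b, G.Adj a b)
    {ι : Type} [Fintype ι] (st : ι → P × Finset P) (k : ℕ) (hk : 1 ≤ k)
    (hstar : ∀ i : ι, (st i).2.Nonempty ∧ ∀ l ∈ (st i).2, G.Adj (st i).1 l)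
    (hcover : ∀ a b : P, G.Adj a b →
      k ≤ (Finset.univ.filter fun i : ι =>
        ∃ l ∈ (st i).2, ({a, b} : Finset P) = {(st i).1, l}).card)
    (w : ℕ)
    (hw : w = Finset.univ.sup fun u : P =>
      (Finset.univ.filter fun i : ι => u = (st i).1 ∨ u ∈ (st i).2).card) :
    (∃ 𝒮 : Scheme P, 𝒮.Realizes (graphAS G hne) ∧
        𝒮.complexity ≤ ENNReal.ofReal ((w : ℝ) / (k : ℝ))) ∧
      sigmaC (graphAS G hne) ≤ ENNReal.ofReal ((w : ℝ) / (k : ℝ)) := by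
  classical
  obtain ⟨q, hqge, hqprime⟩ := Nat.exists_infinite_primes (Fintype.card ι + 1)
  haveI : Fact q.Prime := ⟨hqprime⟩
  haveI : NeZero q := ⟨hqprime.pos.ne'⟩
  have hcardlt : Fintype.card ι < q := by omega
  set x : ι → ZMod q := fun i => ((Fintype.equivFin ι i : ℕ) : ZMod q) with hxdef
  have hx : Function.Injective x := by
    intro i i' h
    simp only [hxdef] at h
    have hval := congrArg ZMod.val h
    rw [ZMod.val_cast_of_lt (lt_trans (Fin.is_lt _) hcardlt),
      ZMod.val_cast_of_lt (lt_trans (Fin.is_lt _) hcardlt)] at hval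
    exact (Fintype.equivFin ι).injective (Fin.ext hval)
  have hm : ∀ s : Set ((ι → ZMod q) × (Fin k → ZMod q)),
      MeasurableSet[(starScheme st q k x).ms] s :=
    fun _ => MeasurableSpace.measurableSet_top
  have hlogq : (0:ℝ) < Real.log q :=
    Real.log_pos (by exact_mod_cast hqprime.one_lt)
  have hHsec : H (starScheme st q k x).μ (starScheme st q k x).sec
      = (k : ℝ) * Real.log q := @H_secF ι _ _ q _ k ((starScheme st q k x).ms) hm
  have hHsecpos : 0 < H (starScheme st q k x).μ (starScheme st q k x).sec := by
    rw [hHsec]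
    have hk' : (0:ℝ) < k := by exact_mod_cast hk
    exact mul_pos hk' hlogq
  have hreal : (starScheme st q k x).Realizes (graphAS G hne) := by
    refine ⟨hHsecpos, ?_, ?_⟩
    · intro A hA
      exact @starScheme_determined P _ _ ι _ _ st q _ _ k x hx
        ((starScheme st q k x).ms) G hne hcover A hA
    · intro A hA
      exact @starScheme_indep P _ _ ι _ _ st q _ k x
        ((starScheme st q k x).ms) hm G hne hstar A hA
  have hcompl : (starScheme st q k x).complexity ≤ ENNReal.ofReal ((w : ℝ) / (k : ℝ)) := by
    rw [Scheme.complexity, hHsec]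
    have hsup : (⨆ p : P, ENNReal.ofReal (H (starScheme st q k x).μ
        ((starScheme st q k x).sh p))) ≤ ENNReal.ofReal ((w : ℝ) * Real.log q) := by
      refine iSup_le fun p => ?_
      have hH : H (starScheme st q k x).μ ((starScheme st q k x).sh p)
          = (Fintype.card {i : ι // p = (st i).1 ∨ p ∈ (st i).2} : ℝ) * Real.log q :=
        @H_shF P _ _ ι _ _ st q _ x k p ((starScheme st q k x).ms) hm
      rw [hH]
      refine ENNReal.ofReal_le_ofReal (mul_le_mul_of_nonneg_right ?_ hlogq.le)
      have hd : (Finset.univ.filter fun i : ι => p = (st i).1 ∨ p ∈ (st i).2).card ≤ w := by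
        rw [hw]
        exact Finset.le_sup (f := fun u : P =>
          (Finset.univ.filter fun i : ι => u = (st i).1 ∨ u ∈ (st i).2).card)
          (Finset.mem_univ p)
      rw [Fintype.card_subtype]
      exact_mod_cast hd
    refine le_trans (ENNReal.div_le_div_right hsup _) ?_
    have hkl : (0:ℝ) < (k:ℝ) * Real.log q := by
      have hk' : (0:ℝ) < k := by exact_mod_cast hk
      exact mul_pos hk' hlogq
    rw [← ENNReal.ofReal_div_of_pos hkl]
    apply le_of_eq
    congr 1
    rw [mul_div_mul_comm, div_self hlogq.ne', mul_one]
  refine ⟨⟨starScheme st q k x, hreal, hcompl⟩, ?_⟩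
  have hσ : sigmaC (graphAS G hne) ≤ (starScheme st q k x).complexity := by
    exact iInf₂_le (f := fun (𝒯 : Scheme P) (_ : 𝒯.Realizes (graphAS G hne)) => 𝒯.complexity)
      (starScheme st q k x) hreal
  exact le_trans hσ hcompl

end

end OnlineSecretSharing
end

section
/- Let Γ be an access structure on a finite set P and let (S_α, v_α)_{α∈A} be a finite family where each S_α is a set of members of Γ and each v_α ∈ P, such that every member of Γ belongs to at least k of the sets S_α (k ≥ 1). For a participant x define w(x) = |{α : x = v_α}| + Σ_{α : x ≠ v_α} |{H ∈ S_α : x ∈ H}|. Then there exists a perfect secret sharing scheme realizing Γ with complexity at most (max_{x∈P} w(x))/k; consequently σ(Γ) ≤ max_x w(x)/k. -/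
open MeasureTheory Finset
open scoped ENNReal

namespace OnlineSecretSharing

noncomputable section

namespace SC
set_option linter.unusedSectionVars false

/-! ### Uniform measures on finite types -/

noncomputable def unif (Ω : Type*) [Fintype Ω] : @Measure Ω ⊤ :=
  (Fintype.card Ω : ℝ≥0∞)⁻¹ • @Measure.count Ω ⊤

lemma unif_apply {Ω : Type*} [Fintype Ω] (s : Set Ω) :
    unif Ω s = (s.toFinite.toFinset.card : ℝ≥0∞) / (Fintype.card Ω) := by
  rw [unif, Measure.smul_apply, @Measure.count_apply_finite' Ω ⊤ s s.toFinite trivial]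
  simp [ENNReal.div_eq_inv_mul]

instance unif_prob (Ω : Type*) [Fintype Ω] [Nonempty Ω] :
    IsProbabilityMeasure (unif Ω) := by
  constructor
  rw [unif_apply]
  have h0 : (Fintype.card Ω : ℝ≥0∞) ≠ 0 := by
    simp [Fintype.card_ne_zero]
  rw [ENNReal.div_eq_one_iff h0 (by simp)]
  congr 1
  simp [Set.toFinite_toFinset]

lemma unif_preimage {Ω : Type*} [Fintype Ω] [DecidableEq Ω] {T : Type*} [DecidableEq T]
    (X : Ω → T) (t : T) :
    unif Ω (X ⁻¹' {t}) = ((univ.filter fun ω => X ω = t).card : ℝ≥0∞) / (Fintype.card Ω) := by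
  have h : (X ⁻¹' {t}).toFinite.toFinset = univ.filter fun ω => X ω = t := by
    ext ω; simp
  rw [unif_apply, h]

section Homs
variable {Ω : Type*} [Fintype Ω] [DecidableEq Ω] [AddCommGroup Ω]
  {T : Type*} [DecidableEq T] [AddCommGroup T]

lemma exists_of_mem_image {f : Ω → T} {t : T} (ht : t ∈ univ.image f) : ∃ ω, f ω = t := by
  rcases Finset.mem_image.1 ht with ⟨ω, _, h⟩
  exact ⟨ω, h⟩

lemma card_fiber_eq (f : Ω → T) (hf : ∀ a b, f (a + b) = f a + f b)
    {t : T} (ht : ∃ ω, f ω = t) :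
    (univ.filter fun ω => f ω = t).card = (univ.filter fun ω => f ω = 0).card := by
  obtain ⟨ω₀, h0⟩ := ht
  have hsub : ∀ a b : Ω, f (a - b) = f a - f b := by
    intro a b
    have h1 := hf (a - b) b
    rw [sub_add_cancel] at h1
    rw [eq_sub_of_add_eq h1.symm]
  refine Finset.card_bij' (fun ω _ => ω - ω₀) (fun ω _ => ω + ω₀) ?_ ?_ ?_ ?_
  · intro a ha
    simp only [mem_filter, mem_univ, true_and] at ha ⊢
    rw [hsub, ha, h0, sub_self]
  · intro a ha
    simp only [mem_filter, mem_univ, true_and] at ha ⊢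
    rw [hf, ha, h0, zero_add]
  · intro a _; simp
  · intro a _; simp

lemma card_image_mul (f : Ω → T) (hf : ∀ a b, f (a + b) = f a + f b) :
    (univ.image f).card * (univ.filter fun ω => f ω = 0).card = Fintype.card Ω := by
  have h := Finset.card_eq_sum_card_fiberwise (f := f) (s := univ) (t := univ.image f)
    (fun x _ => mem_image_of_mem f (mem_univ x))
  rw [Finset.card_univ] at h
  rw [h, Finset.sum_congr rfl fun t ht => card_fiber_eq f hf (exists_of_mem_image ht)]
  rw [Finset.sum_const, smul_eq_mul]

lemma entropy_hom [Nonempty Ω] [Fintype T] (f : Ω → T)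
    (hf : ∀ a b, f (a + b) = f a + f b) :
    @H Ω ⊤ (unif Ω) T _ f = Real.log ((univ.image f).card) := by
  classical
  set m := (univ.image f).card with hm
  have hmpos : 0 < m := Finset.card_pos.2 ((Finset.univ_nonempty).image f)
  have hNpos : 0 < Fintype.card Ω := Fintype.card_pos
  set K := (univ.filter fun ω => f ω = 0).card with hK
  have hmK : m * K = Fintype.card Ω := card_image_mul f hf
  have key : ∀ t : T, (unif Ω (f ⁻¹' {t})).toReal =
      if t ∈ univ.image f then (1 : ℝ) / m else 0 := by
    intro t
    by_cases ht : t ∈ univ.image f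
    · rw [if_pos ht, unif_preimage, card_fiber_eq f hf (exists_of_mem_image ht), ← hK,
        ENNReal.toReal_div]
      simp only [ENNReal.toReal_natCast]
      rw [div_eq_div_iff (by positivity) (by positivity)]
      push_cast [← hmK]; ring
    · rw [if_neg ht, unif_preimage]
      have h2 : (univ.filter fun ω => f ω = t) = ∅ := by
        rw [Finset.filter_eq_empty_iff]
        intro ω _ hω
        exact ht (hω ▸ mem_image_of_mem f (mem_univ ω))
      rw [h2]; simp
  have hH : @H Ω ⊤ (unif Ω) T _ f =
      ∑ t : T, Real.negMulLog ((unif Ω) (f ⁻¹' {t})).toReal := rfl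
  rw [hH, Finset.sum_congr rfl fun t _ => by rw [key t]]
  rw [← Finset.sum_filter_add_sum_filter_not univ (fun t => t ∈ univ.image f)]
  have h2 : ∀ t ∈ univ.filter (fun t => ¬ t ∈ univ.image f),
      Real.negMulLog (if t ∈ univ.image f then (1:ℝ)/m else 0) = 0 := by
    intro t ht
    rw [if_neg (Finset.mem_filter.1 ht).2, Real.negMulLog_zero]
  rw [Finset.sum_congr rfl h2, Finset.sum_const, smul_zero, add_zero]
  have h1 : ∀ t ∈ univ.filter (fun t => t ∈ univ.image f),
      Real.negMulLog (if t ∈ univ.image f then (1:ℝ)/m else 0) =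
      (1/m) * Real.log m := by
    intro t ht
    rw [if_pos (Finset.mem_filter.1 ht).2, Real.negMulLog, one_div, Real.log_inv]
    ring
  rw [Finset.sum_congr rfl h1, Finset.sum_const, nsmul_eq_mul]
  have h3 : (univ.filter (fun t => t ∈ univ.image f)).card = m := by
    rw [Finset.filter_mem_eq_inter, Finset.univ_inter]
  rw [h3]
  field_simp

lemma determinedBy_of_pointwise {Ω S T : Type*} [MeasurableSpace Ω] [Nonempty Ω]
    (μ : Measure Ω) (Y : Ω → T) (X : Ω → S)
    (h : ∀ ω ω', X ω = X ω' → Y ω = Y ω') : DeterminedBy μ Y X := by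
  classical
  refine ⟨fun s => if hs : ∃ ω, X ω = s then Y hs.choose else Y (Classical.arbitrary Ω), ?_⟩
  apply Filter.Eventually.of_forall
  intro ω
  have hs : ∃ ω', X ω' = X ω := ⟨ω, rfl⟩
  show Y ω = if hs' : ∃ ω', X ω' = X ω then Y hs'.choose else Y (Classical.arbitrary Ω)
  rw [dif_pos hs]
  exact h ω hs.choose hs.choose_spec.symm

lemma indep_of_compensate {S : Type*} [Fintype S] [DecidableEq S] [AddCommGroup S]
    (f : Ω → T) (g : Ω → S)
    (hf : ∀ a b, f (a + b) = f a + f b) (hg : ∀ a b, g (a + b) = g a + g b)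
    (hgs : Function.Surjective g)
    (hcomp : ∀ s : S, ∃ ω, f ω = 0 ∧ g ω = s) :
    @IndepRV Ω ⊤ (unif Ω) T S f g := by
  classical
  intro a b
  have hne : Nonempty Ω := ⟨(hcomp 0).choose⟩
  set N := Fintype.card Ω with hN
  have hNpos : 0 < N := Fintype.card_pos
  set Ψ : Ω → T × S := fun ω => (f ω, g ω) with hΨdef
  have hΨ : ∀ x y, Ψ (x + y) = Ψ x + Ψ y := by
    intro x y; simp [hΨdef, Prod.ext_iff, hf, hg]
  have hset : f ⁻¹' {a} ∩ g ⁻¹' {b} = Ψ ⁻¹' {(a, b)} := by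
    ext ω; simp [hΨdef, Prod.ext_iff]
  rw [hset, unif_preimage, unif_preimage, unif_preimage]
  set KΨ := (univ.filter fun ω => Ψ ω = (a, b)).card with hKΨ
  set Ka := (univ.filter fun ω => f ω = a).card with hKa
  set Kb := (univ.filter fun ω => g ω = b).card with hKb
  have key : KΨ * N = Ka * Kb := by
    by_cases ha : a ∈ univ.image f
    · have hab : ∃ ω, Ψ ω = (a, b) := by
        obtain ⟨ω₀, h₀⟩ := exists_of_mem_image ha
        obtain ⟨ω₁, h₁, h₂⟩ := hcomp (b - g ω₀)
        exact ⟨ω₀ + ω₁, by simp [hΨdef, hf, hg, h₀, h₁, h₂, Prod.ext_iff]⟩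
      have himΨ : univ.image Ψ = (univ.image f) ×ˢ (univ : Finset S) := by
        ext ⟨t, s⟩
        rw [Finset.mem_image, Finset.mem_product]
        constructor
        · rintro ⟨ω, -, h⟩
          refine ⟨?_, Finset.mem_univ _⟩
          have hft : f ω = t := congrArg Prod.fst h
          exact hft ▸ mem_image_of_mem f (mem_univ ω)
        · rintro ⟨ht, -⟩
          obtain ⟨ω₀, -, h₀⟩ := Finset.mem_image.1 ht
          obtain ⟨ω₁, h₁, h₂⟩ := hcomp (s - g ω₀)
          exact ⟨ω₀ + ω₁, mem_univ _, by simp [hΨdef, hf, hg, h₀, h₁, h₂, Prod.ext_iff]⟩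
      have hmΨ : (univ.image Ψ).card = (univ.image f).card * Fintype.card S := by
        rw [himΨ, Finset.card_product, Finset.card_univ]
      have himg : (univ.image g) = univ := Finset.image_univ_of_surjective hgs
      have e1 := card_image_mul Ψ hΨ
      have e2 := card_image_mul f hf
      have e3 := card_image_mul g hg
      rw [himg, Finset.card_univ] at e3
      rw [hmΨ] at e1
      rw [card_fiber_eq Ψ hΨ hab, ← hKΨ] at *
      rw [card_fiber_eq f hf (exists_of_mem_image ha), ← hKa] at *
      rw [card_fiber_eq g hg (hgs b), ← hKb] at *
      set mf := (univ.image f).card with hmf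
      have hmfpos : 0 < mf := Finset.card_pos.2 ⟨a, ha⟩
      have hSpos : 0 < Fintype.card S := Fintype.card_pos
      have hcancel : (mf * Fintype.card S) * (KΨ * N) = (mf * Fintype.card S) * (Ka * Kb) := by
        calc (mf * Fintype.card S) * (KΨ * N) = (mf * Fintype.card S * KΨ) * N := by ring
        _ = N * N := by rw [e1]
        _ = (mf * Ka) * (Fintype.card S * Kb) := by rw [e2, e3]
        _ = (mf * Fintype.card S) * (Ka * Kb) := by ring
      exact Nat.eq_of_mul_eq_mul_left (by positivity) hcancel
    · have h1 : KΨ = 0 := by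
        rw [hKΨ, Finset.card_eq_zero, Finset.filter_eq_empty_iff]
        intro ω _ hω
        have hfa : f ω = a := congrArg Prod.fst hω
        exact ha (hfa ▸ mem_image_of_mem f (mem_univ ω))
      have h2 : Ka = 0 := by
        rw [hKa, Finset.card_eq_zero, Finset.filter_eq_empty_iff]
        intro ω _ hω
        exact ha (hω ▸ mem_image_of_mem f (mem_univ ω))
      rw [h1, h2]; ring
  have hN0 : (N : ℝ≥0∞) ≠ 0 := by exact_mod_cast Nat.cast_ne_zero.2 hNpos.ne'
  have hNt : (N : ℝ≥0∞) ≠ ⊤ := ENNReal.natCast_ne_top N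
  calc (KΨ : ℝ≥0∞) / N = (KΨ * N) / (N * N) := by
        rw [ENNReal.mul_div_mul_right _ _ hN0 hNt]
    _ = (Ka * Kb : ℕ) / ((N : ℝ≥0∞) * N) := by rw [← Nat.cast_mul, key]
    _ = (Ka : ℝ≥0∞) / N * ((Kb : ℝ≥0∞) / N) := by
        rw [Nat.cast_mul, ENNReal.div_eq_inv_mul, ENNReal.div_eq_inv_mul,
          ENNReal.div_eq_inv_mul, ENNReal.mul_inv (Or.inl hN0) (Or.inl hNt)]
        ring

end Homs

/-! ### Interpolation -/

lemma vandermonde_zero {F : Type*} [Field F] {k : ℕ} (s : Fin k → F) (C : Finset F)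
    (hC : k ≤ C.card) (h : ∀ c ∈ C, ∑ j : Fin k, c ^ (j : ℕ) * s j = 0) : s = 0 := by
  classical
  rcases Nat.eq_zero_or_pos k with hk | hk
  · funext j; exact absurd j.isLt (by omega)
  set q : Polynomial F := ∑ j : Fin k, Polynomial.C (s j) * Polynomial.X ^ (j : ℕ) with hqdef
  have hdeg0 : q.natDegree ≤ k - 1 :=
    Polynomial.natDegree_sum_le_of_forall_le (univ : Finset (Fin k))
      (fun j : Fin k => Polynomial.C (s j) * Polynomial.X ^ (j : ℕ))
      (fun j _ => le_trans (Polynomial.natDegree_C_mul_X_pow_le (s j) (j : ℕ)) (by omega))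
  have hdeg : q.natDegree < k := by omega
  have hq : q = 0 := by
    refine Polynomial.eq_zero_of_natDegree_lt_card_of_eval_eq_zero' q C ?_ (lt_of_lt_of_le hdeg hC)
    intro c hc
    rw [hqdef, Polynomial.eval_finset_sum]
    simp only [Polynomial.eval_mul, Polynomial.eval_C, Polynomial.eval_pow, Polynomial.eval_X]
    rw [← h c hc]
    exact Finset.sum_congr rfl fun j _ => mul_comm _ _
  funext j
  have hc := congrArg (fun p => Polynomial.coeff p (j : ℕ)) hq
  simp only [hqdef, Polynomial.finset_sum_coeff, Polynomial.coeff_C_mul,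
    Polynomial.coeff_X_pow, Polynomial.coeff_zero, mul_ite, mul_one, mul_zero] at hc
  simp only [Fin.val_eq_val, Finset.sum_ite_eq, Finset.mem_univ, if_true] at hc
  simpa using hc

/-! ### The star-cover scheme -/

variable {P : Type} [Fintype P] [DecidableEq P] [Nonempty P]
variable {ι : Type} [Fintype ι] [DecidableEq ι]
variable {F : Type} [Field F] [Fintype F] [DecidableEq F]

/-- leaf set of the block `(i, Hs)` -/
def Lf (v : ι → P) (i : ι) (Hs : Finset P) : Finset P :=
  if v i ∈ Hs then Hs.erase (v i) else Hs

/-- designated leaf of a block -/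
def dsg (v : ι → P) (i : ι) (Hs : Finset P) : P :=
  if h : (Lf v i Hs).Nonempty then h.choose else Classical.arbitrary P

/-- the value shared through star `i` -/
def uf (e : ι → F) (k : ℕ) (i : ι) (s : Fin k → F) : F :=
  ∑ j : Fin k, e i ^ (j : ℕ) * s j

/-- the sample space -/
abbrev Om (P ι F : Type) [Fintype P] [DecidableEq P] (k : ℕ) : Type :=
  (Fin k → F) × (ι → F) × (ι → Finset P → P → F)

/-- center share of star `i` -/
def cen (SS : ι → Finset (Finset P)) (v : ι → P) (e : ι → F) (k : ℕ) (i : ι)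
    (ω : Om P ι F k) : F :=
  if ({v i} : Finset P) ∈ SS i then uf e k i ω.1 else ω.2.1 i

/-- value broadcast to leaf `x` of block `(i, Hs)` -/
def tval (v : ι → P) (e : ι → F) (k : ℕ) (i : ι) (Hs : Finset P) (x : P)
    (ω : Om P ι F k) : F :=
  if x = dsg v i Hs then
    (uf e k i ω.1 + (if v i ∈ Hs then ω.2.1 i else 0)) -
      ∑ y ∈ (Lf v i Hs).erase x, ω.2.2 i Hs y
  else ω.2.2 i Hs x

/-- the share of participant `x` -/
def shf (SS : ι → Finset (Finset P)) (v : ι → P) (e : ι → F) (k : ℕ) (x : P)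
    (ω : Om P ι F k) : (ι → F) × (ι → Finset P → F) :=
  (fun i => if x = v i then cen SS v e k i ω else 0,
   fun i Hs => if Hs ∈ SS i ∧ x ∈ Lf v i Hs then tval v e k i Hs x ω else 0)

variable (SS : ι → Finset (Finset P)) (v : ι → P) (e : ι → F) (k : ℕ)

lemma lf_subset (i : ι) (Hs : Finset P) : Lf v i Hs ⊆ Hs := by
  rw [Lf]; split_ifs
  · exact Finset.erase_subset _ _
  · exact Finset.Subset.refl _

lemma uf_add (i : ι) (s s' : Fin k → F) :
    uf e k i (s + s') = uf e k i s + uf e k i s' := by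
  simp [uf, mul_add, Finset.sum_add_distrib]

lemma cen_add (i : ι) (ω ω' : Om P ι F k) :
    cen SS v e k i (ω + ω') = cen SS v e k i ω + cen SS v e k i ω' := by
  simp only [cen]
  split_ifs with h
  · exact uf_add e k i ω.1 ω'.1
  · rfl

lemma tval_add (i : ι) (Hs : Finset P) (x : P) (ω ω' : Om P ι F k) :
    tval v e k i Hs x (ω + ω') = tval v e k i Hs x ω + tval v e k i Hs x ω' := by
  simp only [tval, Prod.fst_add, Prod.snd_add, Pi.add_apply, uf_add, Finset.sum_add_distrib]
  split_ifs with h h2 <;> ring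

lemma shf_add (x : P) (ω ω' : Om P ι F k) :
    shf SS v e k x (ω + ω') = shf SS v e k x ω + shf SS v e k x ω' := by
  simp only [shf, Prod.ext_iff]
  constructor
  · funext i
    simp only [Pi.add_apply, Prod.fst_add]
    split_ifs with h
    · exact cen_add SS v e k i ω ω'
    · simp
  · funext i Hs
    simp only [Pi.add_apply, Prod.snd_add]
    split_ifs with h
    · exact tval_add v e k i Hs x ω ω'
    · simp

lemma sum_tval (i : ι) (Hs : Finset P) (hne : (Lf v i Hs).Nonempty) (ω : Om P ι F k) :
    ∑ x ∈ Lf v i Hs, tval v e k i Hs x ω =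
      uf e k i ω.1 + (if v i ∈ Hs then ω.2.1 i else 0) := by
  have hd : dsg v i Hs ∈ Lf v i Hs := by
    rw [dsg, dif_pos hne]; exact hne.choose_spec
  rw [← Finset.add_sum_erase _ _ hd]
  have h1 : tval v e k i Hs (dsg v i Hs) ω =
      (uf e k i ω.1 + (if v i ∈ Hs then ω.2.1 i else 0)) -
        ∑ y ∈ (Lf v i Hs).erase (dsg v i Hs), ω.2.2 i Hs y := if_pos rfl
  have h2 : ∀ x ∈ (Lf v i Hs).erase (dsg v i Hs),
      tval v e k i Hs x ω = ω.2.2 i Hs x := by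
    intro x hx
    exact if_neg (Finset.ne_of_mem_erase hx)
  rw [h1, Finset.sum_congr rfl h2]
  ring

lemma reconstruct_star (Γ : AccessStructure P) (hSS : ∀ i, SS i ⊆ Γ.edges)
    {E A : Finset P} (hE : E ∈ Γ.edges) (hEA : E ⊆ A) {i : ι} (hiE : E ∈ SS i)
    {ω : Om P ι F k} (h0 : ∀ x ∈ A, shf SS v e k x ω = 0) :
    uf e k i ω.1 = 0 := by
  have hcen : v i ∈ A → cen SS v e k i ω = 0 := by
    intro hvA
    have h := congrFun (congrArg Prod.fst (h0 (v i) hvA)) i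
    simpa [shf] using h
  have htv : ∀ x ∈ Lf v i E, tval v e k i E x ω = 0 := by
    intro x hx
    have hxA : x ∈ A := hEA (lf_subset v i E hx)
    have h := congrFun (congrFun (congrArg Prod.snd (h0 x hxA)) i) E
    simpa [shf, hiE, hx] using h
  by_cases hvE : v i ∈ E
  · by_cases hvc : ({v i} : Finset P) ∈ SS i
    · have hEv : ({v i} : Finset P) = E :=
        Γ.sperner _ (hSS i hvc) E hE (Finset.singleton_subset_iff.2 hvE)
      have h := hcen (hEA hvE)
      rw [cen, if_pos hvc] at h
      exact h
    · have hEne : E ≠ {v i} := fun h => hvc (h ▸ hiE)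
      have hLf : Lf v i E = E.erase (v i) := if_pos hvE
      have hne : (Lf v i E).Nonempty := by
        rw [hLf]
        by_contra hcon
        rw [Finset.not_nonempty_iff_eq_empty] at hcon
        apply hEne
        apply Finset.eq_singleton_iff_nonempty_unique_mem.2
        refine ⟨Γ.mem_nonempty E hE, fun y hy => ?_⟩
        by_contra hne2
        exact absurd (Finset.mem_erase.2 ⟨hne2, hy⟩) (by simp [hcon])
      have hsum := sum_tval v e k i E hne ω
      rw [Finset.sum_eq_zero htv, if_pos hvE] at hsum
      have hr : ω.2.1 i = 0 := by
        have h := hcen (hEA hvE)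
        rw [cen, if_neg hvc] at h
        exact h
      rw [hr, add_zero] at hsum
      exact hsum.symm
  · have hLf : Lf v i E = E := if_neg hvE
    have hne : (Lf v i E).Nonempty := by rw [hLf]; exact Γ.mem_nonempty E hE
    have hsum := sum_tval v e k i E hne ω
    rw [Finset.sum_eq_zero htv, if_neg hvE, add_zero] at hsum
    exact hsum.symm

lemma reconstruct (Γ : AccessStructure P) (hSS : ∀ i, SS i ⊆ Γ.edges)
    (he : Function.Injective e)
    (hcover : ∀ E ∈ Γ.edges, k ≤ (univ.filter fun i : ι => E ∈ SS i).card)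
    {A : Finset P} (hA : Γ.Qualified A) {ω : Om P ι F k}
    (h0 : ∀ x ∈ A, shf SS v e k x ω = 0) : ω.1 = 0 := by
  obtain ⟨E, hE, hEA⟩ := hA
  apply vandermonde_zero ω.1 ((univ.filter fun i : ι => E ∈ SS i).image e)
  · rw [Finset.card_image_of_injective _ he]
    exact hcover E hE
  · intro c hc
    obtain ⟨i, hi, rfl⟩ := Finset.mem_image.1 hc
    exact reconstruct_star SS v e k Γ hSS hE hEA (Finset.mem_filter.1 hi).2 h0

lemma compensate (Γ : AccessStructure P) (hSS : ∀ i, SS i ⊆ Γ.edges)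
    {A : Finset P} (hA : ¬ Γ.Qualified A) (s : Fin k → F) :
    ∃ ω : Om P ι F k, (∀ x ∈ A, shf SS v e k x ω = 0) ∧ ω.1 = s := by
  classical
  have hxq : ∀ Hs ∈ Γ.edges, ¬ Hs ⊆ A := fun Hs h1 h2 => hA ⟨Hs, h1, h2⟩
  let r : ι → F := fun i =>
    if ∃ Hs ∈ SS i, v i ∈ Hs ∧ Hs.erase (v i) ⊆ A then -(uf e k i s) else 0
  let cY : ι → Finset P → P := fun i Hs =>
    if h : ((Lf v i Hs) \ A).Nonempty then h.choose else Classical.arbitrary P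
  let tf : ι → Finset P → P → F := fun i Hs x =>
    if Hs ∈ SS i ∧ dsg v i Hs ∈ A ∧ x = cY i Hs ∧ x ∉ A then
      uf e k i s + (if v i ∈ Hs then r i else 0) else 0
  refine ⟨(s, r, tf), ?_, rfl⟩
  intro x hxA
  rw [shf, Prod.ext_iff]
  constructor
  · funext i
    show (if x = v i then cen SS v e k i (s, r, tf) else 0) = 0
    split_ifs with hxv
    · rw [cen]
      split_ifs with hvc
      · exact absurd (Finset.singleton_subset_iff.2 (hxv ▸ hxA)) (hxq _ (hSS i hvc))
      · show r i = 0
        apply if_neg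
        rintro ⟨Hs, hHs, hvHs, hsub⟩
        apply hxq Hs (hSS i hHs)
        intro y hy
        by_cases hyv : y = v i
        · rw [hyv, ← hxv]; exact hxA
        · exact hsub (Finset.mem_erase.2 ⟨hyv, hy⟩)
    · rfl
  · funext i Hs
    show (if Hs ∈ SS i ∧ x ∈ Lf v i Hs then tval v e k i Hs x (s, r, tf) else 0) = 0
    split_ifs with hb
    swap
    · rfl
    obtain ⟨hHs, hxL⟩ := hb
    by_cases hxd : x = dsg v i Hs
    · rw [tval, if_pos hxd]
      by_cases hdiff : ((Lf v i Hs) \ A).Nonempty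
      · have hy0 : cY i Hs ∈ Lf v i Hs \ A := by
          rw [show cY i Hs = hdiff.choose from dif_pos hdiff]
          exact hdiff.choose_spec
        have hy0L : cY i Hs ∈ Lf v i Hs := (Finset.mem_sdiff.1 hy0).1
        have hy0A : cY i Hs ∉ A := (Finset.mem_sdiff.1 hy0).2
        have hy0e : cY i Hs ∈ (Lf v i Hs).erase x :=
          Finset.mem_erase.2 ⟨fun hc => hy0A (hc ▸ hxA), hy0L⟩
        have hsum : ∑ y ∈ (Lf v i Hs).erase x, tf i Hs y =
            uf e k i s + (if v i ∈ Hs then r i else 0) := by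
          rw [Finset.sum_eq_single_of_mem (cY i Hs) hy0e ?_]
          · exact if_pos ⟨hHs, hxd ▸ hxA, rfl, hy0A⟩
          · intro b hbmem hbne
            apply if_neg
            rintro ⟨-, -, hbc, -⟩
            exact hbne hbc
        show (uf e k i s + (if v i ∈ Hs then r i else 0)) -
            ∑ y ∈ (Lf v i Hs).erase x, tf i Hs y = 0
        rw [hsum, sub_self]
      · have hsub : Lf v i Hs ⊆ A := by
          intro y hy
          by_contra hyA
          exact hdiff ⟨y, Finset.mem_sdiff.2 ⟨hy, hyA⟩⟩
        have hsum : ∑ y ∈ (Lf v i Hs).erase x, tf i Hs y = 0 := by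
          apply Finset.sum_eq_zero
          intro y hy
          apply if_neg
          rintro ⟨-, -, -, hyA⟩
          exact hyA (hsub (Finset.mem_of_mem_erase hy))
        show (uf e k i s + (if v i ∈ Hs then r i else 0)) -
            ∑ y ∈ (Lf v i Hs).erase x, tf i Hs y = 0
        rw [hsum, sub_zero]
        by_cases hvH : v i ∈ Hs
        · rw [if_pos hvH]
          have hcond : ∃ Hs' ∈ SS i, v i ∈ Hs' ∧ Hs'.erase (v i) ⊆ A :=
            ⟨Hs, hHs, hvH, by
              rwa [← show Lf v i Hs = Hs.erase (v i) from if_pos hvH]⟩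
          have : r i = -(uf e k i s) := if_pos hcond
          rw [this, add_neg_cancel]
        · exfalso
          have hLf : Lf v i Hs = Hs := if_neg hvH
          exact hxq Hs (hSS i hHs) (hLf ▸ hsub)
    · rw [tval, if_neg hxd]
      show tf i Hs x = 0
      apply if_neg
      rintro ⟨-, -, -, hxA'⟩
      exact hxA' hxA

lemma v_notMem_lf (i : ι) (Hs : Finset P) : v i ∉ Lf v i Hs := by
  rw [Lf]; split_ifs with h
  · exact Finset.notMem_erase _ _
  · exact h

lemma card_image_shf_le (x : P) :
    ((univ : Finset (Om P ι F k)).image (shf SS v e k x)).card ≤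
      (Fintype.card F) ^
        ((univ.filter fun i : ι => x = v i).card +
          ∑ i ∈ univ.filter (fun i : ι => x ≠ v i), ((SS i).filter fun E => x ∈ E).card) := by
  classical
  set Cdom := {i : ι // x = v i} with hCdom
  set Bdom := {q : ι × Finset P // q.2 ∈ SS q.1 ∧ x ∈ Lf v q.1 q.2} with hBdom
  set Core : Om P ι F k → (Cdom → F) × (Bdom → F) := fun ω =>
    (fun i => cen SS v e k i.1 ω, fun q => tval v e k q.1.1 q.1.2 x ω) with hCore
  set Ext : ((Cdom → F) × (Bdom → F)) → (ι → F) × (ι → Finset P → F) := fun g =>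
    (fun i => if h : x = v i then g.1 ⟨i, h⟩ else 0,
     fun i Hs => if h : Hs ∈ SS i ∧ x ∈ Lf v i Hs then g.2 ⟨(i, Hs), h⟩ else 0) with hExt
  have hfact : shf SS v e k x = Ext ∘ Core := by
    funext ω
    refine Prod.ext ?_ ?_
    · funext i
      show (if x = v i then cen SS v e k i ω else 0) =
        (if h : x = v i then cen SS v e k i ω else 0)
      by_cases h : x = v i
      · rw [if_pos h, dif_pos h]
      · rw [if_neg h, dif_neg h]
    · funext i Hs
      show (if Hs ∈ SS i ∧ x ∈ Lf v i Hs then tval v e k i Hs x ω else 0) =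
        (if h : Hs ∈ SS i ∧ x ∈ Lf v i Hs then tval v e k i Hs x ω else 0)
      by_cases h : Hs ∈ SS i ∧ x ∈ Lf v i Hs
      · rw [if_pos h, dif_pos h]
      · rw [if_neg h, dif_neg h]
  have hinj : Function.Injective Ext := by
    intro g g' hgg
    refine Prod.ext ?_ ?_
    · funext i
      have h := congrFun (congrArg Prod.fst hgg) i.1
      rw [show ((Ext g).1 i.1 = if h : x = v i.1 then g.1 ⟨i.1, h⟩ else 0) from rfl,
        show ((Ext g').1 i.1 = if h : x = v i.1 then g'.1 ⟨i.1, h⟩ else 0) from rfl,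
        dif_pos i.2, dif_pos i.2] at h
      exact h
    · funext q
      have h := congrFun (congrFun (congrArg Prod.snd hgg) q.1.1) q.1.2
      rw [show ((Ext g).2 q.1.1 q.1.2 =
          if h : q.1.2 ∈ SS q.1.1 ∧ x ∈ Lf v q.1.1 q.1.2 then g.2 ⟨(q.1.1, q.1.2), h⟩ else 0)
          from rfl,
        show ((Ext g').2 q.1.1 q.1.2 =
          if h : q.1.2 ∈ SS q.1.1 ∧ x ∈ Lf v q.1.1 q.1.2 then g'.2 ⟨(q.1.1, q.1.2), h⟩ else 0)
          from rfl, dif_pos q.2, dif_pos q.2] at h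
      convert h
  have hCcard : Fintype.card Cdom = (univ.filter fun i : ι => x = v i).card :=
    Fintype.card_subtype _
  have hBcard : Fintype.card Bdom ≤
      ∑ i ∈ univ.filter (fun i : ι => x ≠ v i), ((SS i).filter fun E => x ∈ E).card := by
    have hequiv : Fintype.card Bdom =
        ∑ i : ι, (univ.filter fun Hs : Finset P => Hs ∈ SS i ∧ x ∈ Lf v i Hs).card := by
      rw [Fintype.card_congr (Equiv.subtypeProdEquivSigmaSubtype
        (fun (i : ι) (Hs : Finset P) => Hs ∈ SS i ∧ x ∈ Lf v i Hs))]
      rw [Fintype.card_sigma]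
      exact Finset.sum_congr rfl fun i _ => Fintype.card_subtype _
    rw [hequiv, ← Finset.sum_filter_add_sum_filter_not univ (fun i : ι => x ≠ v i)]
    have hzero : ∀ i ∈ univ.filter (fun i : ι => ¬ x ≠ v i),
        (univ.filter fun Hs : Finset P => Hs ∈ SS i ∧ x ∈ Lf v i Hs).card = 0 := by
      intro i hi
      have hxv : x = v i := not_not.1 (Finset.mem_filter.1 hi).2
      rw [Finset.card_eq_zero, Finset.filter_eq_empty_iff]
      rintro Hs - ⟨-, hxL⟩
      exact v_notMem_lf v i Hs (hxv ▸ hxL)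
    rw [Finset.sum_congr rfl hzero, Finset.sum_const, smul_zero, add_zero]
    apply Finset.sum_le_sum
    intro i _
    apply Finset.card_le_card
    intro Hs hHs
    obtain ⟨-, hmem, hxL⟩ := Finset.mem_filter.1 hHs
    exact Finset.mem_filter.2 ⟨hmem, lf_subset v i Hs hxL⟩
  calc ((univ : Finset (Om P ι F k)).image (shf SS v e k x)).card
      = (((univ : Finset (Om P ι F k)).image Core).image Ext).card := by
        rw [Finset.image_image, hfact]
    _ = ((univ : Finset (Om P ι F k)).image Core).card :=
        Finset.card_image_of_injective _ hinj
    _ ≤ Fintype.card ((Cdom → F) × (Bdom → F)) := Finset.card_le_univ _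
    _ = (Fintype.card F) ^ (Fintype.card Cdom) * (Fintype.card F) ^ (Fintype.card Bdom) := by
        rw [Fintype.card_prod, Fintype.card_fun, Fintype.card_fun]
    _ = (Fintype.card F) ^ (Fintype.card Cdom + Fintype.card Bdom) := (pow_add _ _ _).symm
    _ ≤ _ := Nat.pow_le_pow_right Fintype.card_pos
        (by rw [hCcard]; exact Nat.add_le_add_left hBcard _)

end SC

/-- generalized star-cover bound for hypergraphs. Given a
family of generalized stars `(SS i, v i)` such that every hyperedge of `Γ`
belongs to at least `k` of the sets `SS i`, there is a perfect secret sharing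
scheme realizing `Γ` with complexity at most `(max_x w x) / k`, where `w` is
the weight function; consequently `σ(Γ) ≤ (max_x w x) / k`. -/
theorem statement3 {P : Type} [Fintype P] [DecidableEq P] (Γ : AccessStructure P)
    {ι : Type} [Fintype ι] (SS : ι → Finset (Finset P)) (v : ι → P)
    (hSS : ∀ i : ι, SS i ⊆ Γ.edges) (k : ℕ) (hk : 1 ≤ k)
    (hcover : ∀ E ∈ Γ.edges, k ≤ (Finset.univ.filter fun i : ι => E ∈ SS i).card)
    (w : P → ℕ)
    (hw : ∀ x : P, w x = (Finset.univ.filter fun i : ι => x = v i).card +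
      ∑ i ∈ Finset.univ.filter (fun i : ι => x ≠ v i),
        ((SS i).filter fun E => x ∈ E).card) :
    (∃ 𝒮 : Scheme P, 𝒮.Realizes Γ ∧
        𝒮.complexity ≤ ENNReal.ofReal (((Finset.univ.sup w : ℕ) : ℝ) / (k : ℝ))) ∧
      sigmaC Γ ≤ ENNReal.ofReal (((Finset.univ.sup w : ℕ) : ℝ) / (k : ℝ)) := by
  classical
  obtain ⟨E0, hE0⟩ := Γ.nonempty
  obtain ⟨x0, hx0⟩ := Γ.mem_nonempty E0 hE0
  haveI hPne : Nonempty P := ⟨x0⟩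
  obtain ⟨p, hpn, hp⟩ := Nat.exists_infinite_primes (Fintype.card ι + 1)
  haveI : Fact p.Prime := ⟨hp⟩
  have hcardF : Fintype.card (ZMod p) = p := ZMod.card p
  obtain ⟨eemb⟩ : Nonempty (ι ↪ ZMod p) :=
    Function.Embedding.nonempty_of_card_le (by rw [hcardF]; omega)
  set F := ZMod p with hF
  set e : ι → F := (eemb : ι → ZMod p) with he
  haveI hOmne : Nonempty (SC.Om P ι F k) := ⟨0⟩
  let μ0 := SC.unif (SC.Om P ι F k)
  let secf : SC.Om P ι F k → (Fin k → F) := Prod.fst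
  let 𝒮 : Scheme P :=
    { Ω := SC.Om P ι F k
      ms := ⊤
      μ := μ0
      isProb := inferInstance
      Sec := Fin k → F
      secFin := inferInstance
      sec := secf
      Sh := fun _ => (ι → F) × (ι → Finset P → F)
      shFin := fun _ => inferInstance
      sh := SC.shf SS v e k }
  have hsecadd : ∀ a b : SC.Om P ι F k, secf (a + b) = secf a + secf b := fun a b => rfl
  have hsecsurj : Function.Surjective secf := fun s => ⟨(s, 0), rfl⟩
  have hHsec : @H (SC.Om P ι F k) ⊤ μ0 _ _ secf = (k : ℝ) * Real.log p := by
    rw [SC.entropy_hom _ hsecadd, Finset.image_univ_of_surjective hsecsurj,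
      Finset.card_univ, Fintype.card_fun, hcardF, Fintype.card_fin,
      Nat.cast_pow, Real.log_pow]
  have hp2 : 2 ≤ p := hp.two_le
  have hlogp : 0 < Real.log p := Real.log_pos (by exact_mod_cast hp2)
  have hkR : (0:ℝ) < k := by exact_mod_cast hk
  have hHsecpos : 0 < @H (SC.Om P ι F k) ⊤ μ0 _ _ secf := by
    rw [hHsec]; positivity
  have hreal : 𝒮.Realizes Γ := by
    refine ⟨hHsecpos, ?_, ?_⟩
    · intro A hq
      refine @SC.determinedBy_of_pointwise _ _ _ ⊤ hOmne μ0 secf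
        (joint (SC.shf SS v e k) A) ?_
      intro ω ω' hj
      have hz : ∀ x ∈ A, SC.shf SS v e k x (ω - ω') = 0 := by
        intro x hx
        have hadd := SC.shf_add SS v e k x (ω - ω') ω'
        rw [sub_add_cancel] at hadd
        have hxy : SC.shf SS v e k x ω = SC.shf SS v e k x ω' :=
          congrFun hj ⟨x, hx⟩
        have h2 : SC.shf SS v e k x (ω - ω') =
            SC.shf SS v e k x ω - SC.shf SS v e k x ω' := eq_sub_of_add_eq hadd.symm
        rw [hxy, sub_self] at h2
        exact h2
      have h3 := SC.reconstruct SS v e k Γ hSS eemb.injective hcover hq hz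
      show ω.1 = ω'.1
      have h4 : ω.1 - ω'.1 = 0 := h3
      exact sub_eq_zero.1 h4
    · intro A hq
      refine SC.indep_of_compensate (joint (SC.shf SS v e k) A) secf ?_ hsecadd hsecsurj ?_
      · intro a b
        funext pp
        show SC.shf SS v e k pp.1 (a + b) =
          SC.shf SS v e k pp.1 a + SC.shf SS v e k pp.1 b
        exact SC.shf_add SS v e k pp.1 a b
      · intro s
        obtain ⟨ω, hω, hsec⟩ := SC.compensate SS v e k Γ hSS hq s
        refine ⟨ω, ?_, hsec⟩
        funext pp
        exact hω pp.1 pp.2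
  have hW : ∀ x : P, @H (SC.Om P ι F k) ⊤ μ0 _ _ (SC.shf SS v e k x) ≤
      ((univ.sup w : ℕ) : ℝ) * Real.log p := by
    intro x
    rw [SC.entropy_hom _ (SC.shf_add SS v e k x)]
    have h1 := SC.card_image_shf_le SS v e k x
    rw [← hw x] at h1
    have himpos : 0 < ((univ.image (SC.shf SS v e k x)).card : ℝ) := by
      have := Finset.card_pos.2 ((Finset.univ_nonempty).image (SC.shf SS v e k x))
      exact_mod_cast this
    calc Real.log _ ≤ Real.log (((Fintype.card F ^ w x : ℕ) : ℝ)) :=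
        Real.log_le_log himpos (by exact_mod_cast h1)
      _ = (w x : ℝ) * Real.log p := by rw [Nat.cast_pow, Real.log_pow, hcardF]
      _ ≤ ((univ.sup w : ℕ) : ℝ) * Real.log p := by
          apply mul_le_mul_of_nonneg_right _ hlogp.le
          exact_mod_cast Finset.le_sup (mem_univ x)
  have hcompl : 𝒮.complexity ≤ ENNReal.ofReal (((univ.sup w : ℕ) : ℝ) / (k : ℝ)) := by
    have hunf : 𝒮.complexity =
        (⨆ x : P, ENNReal.ofReal (@H (SC.Om P ι F k) ⊤ μ0 _ _ (SC.shf SS v e k x))) /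
          ENNReal.ofReal (@H (SC.Om P ι F k) ⊤ μ0 _ _ secf) := rfl
    rw [hunf, hHsec]
    have hb : (⨆ x : P, ENNReal.ofReal (@H (SC.Om P ι F k) ⊤ μ0 _ _ (SC.shf SS v e k x))) ≤
        ENNReal.ofReal (((univ.sup w : ℕ) : ℝ) * Real.log p) :=
      iSup_le fun x => ENNReal.ofReal_le_ofReal (hW x)
    calc _ ≤ ENNReal.ofReal (((univ.sup w : ℕ) : ℝ) * Real.log p) /
          ENNReal.ofReal ((k : ℝ) * Real.log p) := ENNReal.div_le_div_right hb _
      _ = ENNReal.ofReal (((univ.sup w : ℕ) : ℝ) / (k : ℝ)) := by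
          rw [← ENNReal.ofReal_div_of_pos (by positivity)]
          congr 1
          rw [mul_div_mul_right _ _ hlogp.ne']
  exact ⟨⟨𝒮, hreal, hcompl⟩, le_trans (iInf₂_le 𝒮 hreal) hcompl⟩

end

end OnlineSecretSharing
end

section
/- Let Γ be an access structure on a finite set P in which every member has size at most r for some integer r ≥ 2, and let d = d(Γ) be the maximal degree. Then there exists a perfect secret sharing scheme realizing Γ with complexity at most d − (d−1)/r; consequently σ(Γ) ≤ d − (d−1)/r. -/
open MeasureTheory Finset
open scoped ENNReal

namespace OnlineSecretSharing

noncomputable section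

/-!
The secret is the coefficient vector of a polynomial `f` of degree `< r` over a large enough
finite field. Every minimal qualified set `E` gets `r` distinct evaluation points: the point
`x_v` of each member `v` (shared by all sets containing `v`) and `r - |E|` points of its own.
Participant `v` holds a mask `a_v`, uniformly random unless `{v}` is minimal qualified, in which
case it is `f(x_v)`. For each point `x` of `E`, the value `f(x)`, minus `a_u` if `x = x_u`, is
split additively among the members of `E` other than `u`. Then `E` learns `f` at `r` points,
hence the secret, while each share consists of `1 + deg(v) (r - 1)` field elements against `r`
for the secret.

A set `A` that is not qualified misses a member of every `E`, so a shift of the secret can be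
compensated by a shift of the randomness that does not change the shares of `A`: the masks
outside `A` absorb the change at their own points, and in every additive splitting the piece of
a member outside `A` absorbs the rest. Under the uniform distribution this makes the shares of
`A` independent of the secret.
-/

open ProbabilityTheory

section Entropy

variable {Ω S : Type*} [MeasurableSpace Ω] {μ : Measure Ω} [Fintype S]

lemma H_eq_log_card_of_forall_measure_preimage_singleton {X : Ω → S}
    (hX : ∀ s, μ (X ⁻¹' {s}) = (Fintype.card S : ℝ≥0∞)⁻¹) :
    H μ X = Real.log (Fintype.card S) := by
  rcases isEmpty_or_nonempty S with hS | hS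
  · simp [H]
  simp only [H, hX, ENNReal.toReal_inv, ENNReal.toReal_natCast, Finset.sum_const,
    Finset.card_univ, nsmul_eq_mul, Real.negMulLog, Real.log_inv]
  field_simp

variable [DiscreteMeasurableSpace Ω] [IsProbabilityMeasure μ]

lemma sum_toReal_measure_preimage_singleton (X : Ω → S) :
    ∑ s, (μ (X ⁻¹' {s})).toReal = 1 := by
  rw [← ENNReal.toReal_sum fun s _ => measure_ne_top μ _,
    sum_measure_preimage_singleton _ fun _ _ => .of_discrete]
  simp

lemma H_le_log_card (X : Ω → S) : H μ X ≤ Real.log (Fintype.card S) := by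
  have hsum := sum_toReal_measure_preimage_singleton (μ := μ) X
  have hS : Nonempty S := by
    by_contra h
    rw [not_nonempty_iff] at h
    simp at hsum
  have hn : (0 : ℝ) < Fintype.card S := by exact_mod_cast Fintype.card_pos
  have hJensen := Real.concaveOn_negMulLog.le_map_sum (t := univ)
    (w := fun _ => (Fintype.card S : ℝ)⁻¹) (p := fun s => (μ (X ⁻¹' {s})).toReal)
    (fun _ _ => by positivity) (by simp [hn.ne'])
    (fun _ _ => Set.mem_Ici.2 ENNReal.toReal_nonneg)
  simp only [smul_eq_mul, ← Finset.mul_sum, hsum, mul_one] at hJensen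
  rw [Real.negMulLog, Real.log_inv, neg_mul_neg] at hJensen
  exact le_of_mul_le_mul_left hJensen (inv_pos.2 hn)

end Entropy

section Uniform

variable {Ω S T : Type*} [MeasurableSpace Ω] [DiscreteMeasurableSpace Ω]

lemma sum_uniformOn_inter_preimage_singleton [Fintype S] (Y : Ω → S) (B : Set Ω) :
    ∑ s, uniformOn Set.univ (B ∩ Y ⁻¹' {s}) = uniformOn Set.univ B := by
  simp_rw [Set.inter_comm B, ← Measure.restrict_apply .of_discrete]
  rw [sum_measure_preimage_singleton _ fun _ _ => .of_discrete]
  simp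

variable [Fintype Ω]

lemma uniformOn_univ_preimage_equiv (e : Ω ≃ Ω) (t : Set Ω) :
    uniformOn Set.univ (e ⁻¹' t) = uniformOn Set.univ t := by
  rw [uniformOn_univ, uniformOn_univ, Measure.count_apply .of_discrete,
    Measure.count_apply .of_discrete, Set.encard_preimage_of_bijective e.bijective]

variable [AddGroup S] {X : Ω → T} {Y : Ω → S}
  (hshift : ∀ Δ : S, ∃ e : Ω ≃ Ω, ∀ ω, X (e ω) = X ω ∧ Y (e ω) = Y ω + Δ)
include hshift

lemma uniformOn_inter_preimage_singleton_eq_of_shift (B : Set T) (s s' : S) :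
    uniformOn Set.univ (X ⁻¹' B ∩ Y ⁻¹' {s}) = uniformOn Set.univ (X ⁻¹' B ∩ Y ⁻¹' {s'}) := by
  obtain ⟨e, he⟩ := hshift (-s' + s)
  rw [← uniformOn_univ_preimage_equiv e]
  congr 1
  ext ω
  simp [he, ← add_assoc, add_neg_eq_zero]

variable [Fintype S]

lemma uniformOn_inter_preimage_singleton_of_shift (B : Set T) (s : S) :
    uniformOn Set.univ (X ⁻¹' B ∩ Y ⁻¹' {s})
      = uniformOn Set.univ (X ⁻¹' B) * (Fintype.card S : ℝ≥0∞)⁻¹ := by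
  have hsum := sum_uniformOn_inter_preimage_singleton Y (X ⁻¹' B)
  rw [Finset.sum_congr rfl fun s' _ => uniformOn_inter_preimage_singleton_eq_of_shift hshift B s' s,
    Finset.sum_const, Finset.card_univ, nsmul_eq_mul] at hsum
  have hS : (Fintype.card S : ℝ≥0∞) ≠ 0 := by simp
  rw [← hsum, mul_right_comm, ENNReal.mul_inv_cancel hS (ENNReal.natCast_ne_top _), one_mul]

variable [Nonempty Ω]

lemma uniformOn_preimage_singleton_of_shift (s : S) :
    uniformOn Set.univ (Y ⁻¹' {s}) = (Fintype.card S : ℝ≥0∞)⁻¹ := by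
  simpa using uniformOn_inter_preimage_singleton_of_shift hshift Set.univ s

lemma indepRV_uniformOn_of_shift : IndepRV (uniformOn Set.univ) X Y := fun x s => by
  rw [uniformOn_inter_preimage_singleton_of_shift hshift,
    uniformOn_preimage_singleton_of_shift hshift]

end Uniform

lemma determinedBy_of_factorsThrough {Ω S T : Type*} [MeasurableSpace Ω] [Nonempty T]
    (μ : Measure Ω) {Y : Ω → T} {X : Ω → S} (h : Y.FactorsThrough X) : DeterminedBy μ Y X :=
  ⟨Function.extend X Y fun _ => Classical.arbitrary T,
    ae_of_all _ fun ω => (h.extend_apply _ ω).symm⟩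

lemma AccessStructure.not_qualified_empty {P : Type*} (Γ : AccessStructure P) :
    ¬ Γ.Qualified ∅ := fun ⟨E, hE, hsub⟩ =>
  (Γ.mem_nonempty E hE).ne_empty (Finset.subset_empty.1 hsub)

lemma Scheme.complexity_le_ofReal_div {P : Type} [Fintype P] (𝒮 : Scheme P) {a b : ℝ}
    (hb : 0 < b) (hsec : H 𝒮.μ 𝒮.sec = b) (hsh : ∀ p, H 𝒮.μ (𝒮.sh p) ≤ a) :
    𝒮.complexity ≤ ENNReal.ofReal (a / b) := by
  rw [Scheme.complexity, hsec, ENNReal.ofReal_div_of_pos hb]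
  exact ENNReal.div_le_div_right (iSup_le fun p => ENNReal.ofReal_le_ofReal (hsh p)) _

lemma sigmaC_le_complexity {P : Type} [Fintype P] [DecidableEq P] {Γ : AccessStructure P}
    {𝒮 : Scheme P} (h : 𝒮.Realizes Γ) : sigmaC Γ ≤ 𝒮.complexity :=
  iInf₂_le 𝒮 h

section UniformScheme

variable {P : Type} (Ω : Type) [Fintype Ω] [Nonempty Ω] {Sec : Type} [Fintype Sec]
  (sec : Ω → Sec) {Sh : P → Type} [∀ p, Fintype (Sh p)] (sh : ∀ p, Ω → Sh p)

def uniformScheme : Scheme P where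
  Ω := Ω
  ms := ⊤
  μ := @uniformOn Ω ⊤ Set.univ
  isProb := @instIsProbabilityMeasure_uniformOn_univ Ω ⊤ _ _
  Sec := Sec
  sec := sec
  Sh := Sh
  sh := sh

instance : DiscreteMeasurableSpace (uniformScheme Ω sec sh).Ω :=
  @DiscreteMeasurableSpace.mk _ ⊤ fun _ => MeasurableSpace.measurableSet_top

variable {Ω sec sh}

lemma uniformScheme_H_sh_le (p : P) :
    H (uniformScheme Ω sec sh).μ ((uniformScheme Ω sec sh).sh p) ≤ Real.log (Fintype.card (Sh p)) :=
  have := (uniformScheme Ω sec sh).isProb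
  H_le_log_card _

variable [AddGroup Sec]

lemma uniformScheme_H_sec (hshift : ∀ Δ : Sec, ∃ e : Ω ≃ Ω, ∀ ω, sec (e ω) = sec ω + Δ) :
    H (uniformScheme Ω sec sh).μ (uniformScheme Ω sec sh).sec = Real.log (Fintype.card Sec) := by
  let _ : MeasurableSpace Ω := ⊤
  show H (uniformOn Set.univ) sec = _
  refine H_eq_log_card_of_forall_measure_preimage_singleton
    (uniformOn_preimage_singleton_of_shift (X := fun _ => ()) fun Δ => ?_)
  obtain ⟨e, he⟩ := hshift Δ
  exact ⟨e, fun ω => ⟨rfl, he ω⟩⟩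

variable [Fintype P] [DecidableEq P]

lemma uniformScheme_realizes [Nontrivial Sec] {Γ : AccessStructure P}
    (hqual : ∀ A, Γ.Qualified A → ∀ ω ω', (∀ p ∈ A, sh p ω = sh p ω') → sec ω = sec ω')
    (hunqual : ∀ A, ¬ Γ.Qualified A → ∀ Δ : Sec,
      ∃ e : Ω ≃ Ω, ∀ ω, (∀ p ∈ A, sh p (e ω) = sh p ω) ∧ sec (e ω) = sec ω + Δ) :
    (uniformScheme Ω sec sh).Realizes Γ := by
  let _ : MeasurableSpace Ω := ⊤
  refine ⟨?_, fun A hA => ?_, fun A hA => ?_⟩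
  · rw [uniformScheme_H_sec fun Δ => (hunqual ∅ Γ.not_qualified_empty Δ).imp
      fun _ he ω => (he ω).2]
    exact Real.log_pos (by exact_mod_cast Fintype.one_lt_card)
  · show DeterminedBy (uniformOn Set.univ) sec (joint sh A)
    exact determinedBy_of_factorsThrough _ fun ω ω' h =>
      hqual A hA ω ω' fun p hp => congrFun h ⟨p, hp⟩
  · show IndepRV (uniformOn Set.univ) (joint sh A) sec
    refine indepRV_uniformOn_of_shift fun Δ => ?_
    obtain ⟨e, he⟩ := hunqual A hA Δ
    exact ⟨e, fun ω => ⟨funext fun p => (he ω).1 p p.2, (he ω).2⟩⟩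

end UniformScheme

section PolyEval

variable {R : Type*} [CommRing R] {r : ℕ}

def polyEval (s : Fin r → R) (x : R) : R := ∑ i, s i * x ^ (i : ℕ)

lemma polyEval_add (s s' : Fin r → R) (x : R) :
    polyEval (s + s') x = polyEval s x + polyEval s' x := by
  simp [polyEval, add_mul, Finset.sum_add_distrib]

lemma eq_of_forall_mem_polyEval_eq [IsDomain R] {T : Finset R} (hT : T.card = r)
    {s s' : Fin r → R} (h : ∀ x ∈ T, polyEval s x = polyEval s' x) : s = s' := by
  let e := Fintype.equivFinOfCardEq (by simpa using hT : Fintype.card T = r)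
  rw [← sub_eq_zero]
  refine Matrix.eq_zero_of_forall_index_sum_mul_pow_eq_zero (f := fun i => (e.symm i : R))
    (Subtype.val_injective.comp e.symm.injective) fun j => ?_
  simpa [polyEval, sub_mul, Finset.sum_sub_distrib, sub_eq_zero] using h _ (e.symm j).2

end PolyEval

section AdditiveSharing

variable {P R : Type*} [DecidableEq P] [AddCommGroup R]

def additiveShare (S : Finset P) (d : P) (v : R) (b : P → R) (w : P) : R :=
  if w = d then v - ∑ u ∈ S.erase d, b u else b w

lemma sum_additiveShare {S : Finset P} {d : P} (hd : d ∈ S) (v : R) (b : P → R) :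
    ∑ w ∈ S, additiveShare S d v b w = v := by
  have hrest : ∀ w ∈ S.erase d, additiveShare S d v b w = b w := fun w hw =>
    if_neg (Finset.ne_of_mem_erase hw)
  rw [← Finset.add_sum_erase S _ hd, Finset.sum_congr rfl hrest, additiveShare, if_pos rfl,
    sub_add_cancel]

lemma exists_additiveShare_add_eq {S : Finset P} {w₀ : P} (hw₀ : w₀ ∈ S) (d : P) (δ : R) :
    ∃ t : P → R, ∀ v b w, w ≠ w₀ →
      additiveShare S d (v + δ) (b + t) w = additiveShare S d v b w := by
  by_cases hd : w₀ = d
  · refine ⟨0, fun v b w hw => ?_⟩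
    simp [additiveShare, ← hd, hw]
  · refine ⟨Pi.single w₀ δ, fun v b w hw => ?_⟩
    unfold additiveShare
    split_ifs
    · simp only [Pi.add_apply, Finset.sum_add_distrib, Finset.sum_pi_single',
        if_pos (Finset.mem_erase.2 ⟨hd, hw₀⟩)]
      abel
    · simp [hw]

end AdditiveSharing

namespace EvalScheme

variable {P : Type} (Γ : AccessStructure P) (r : ℕ)

abbrev Point : Type := P ⊕ (Σ E : Γ.edges, Fin (r - E.1.card))

def edgePoints (E : Γ.edges) : Finset (Point Γ r) :=
  E.1.disjSum (Finset.univ.map ⟨Sigma.mk E, sigma_mk_injective⟩)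

lemma card_edgePoints {E : Γ.edges} (hE : E.1.card ≤ r) : (edgePoints Γ r E).card = r := by
  simp only [edgePoints, Finset.card_disjSum, Finset.card_map, Finset.card_univ,
    Fintype.card_fin]
  omega

variable [DecidableEq P]

def holders (E : Γ.edges) (x : Point Γ r) : Finset P := E.1.filter fun w => x ≠ .inl w

def lead (E : Γ.edges) (x : Point Γ r) : P :=
  if h : (holders Γ r E x).Nonempty then h.choose else (Γ.mem_nonempty E.1 E.2).choose

lemma lead_mem {E : Γ.edges} {x : Point Γ r} (h : (holders Γ r E x).Nonempty) :
    lead Γ r E x ∈ holders Γ r E x := by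
  rw [lead, dif_pos h]
  exact h.choose_spec

lemma card_edgesContaining (p : P) : Fintype.card {E : Γ.edges // p ∈ E.1} = Γ.degree p := by
  rw [AccessStructure.degree, ← Fintype.card_coe]
  exact Fintype.card_congr ((Equiv.subtypeSubtypeEquivSubtypeInter (· ∈ Γ.edges) (p ∈ ·)).trans
    (Equiv.subtypeEquivRight fun E => by simp [and_comm]))

variable (F : Type)

abbrev Share (p : P) : Type :=
  F × ((E : {E : Γ.edges // p ∈ E.1}) → (edgePoints Γ r E.1).erase (.inl p) → F)

lemma card_share [Fintype F] (hsize : ∀ E ∈ Γ.edges, E.card ≤ r) (p : P) :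
    Fintype.card (Share Γ r F p) = Fintype.card F ^ (1 + Γ.degree p * (r - 1)) := by
  have hslots : ∀ E : {E : Γ.edges // p ∈ E.1},
      Fintype.card ((edgePoints Γ r E.1).erase (.inl p)) = r - 1 := fun E => by
    rw [Fintype.card_coe, Finset.card_erase_of_mem (by simpa [edgePoints] using E.2),
      card_edgePoints Γ r (hsize _ E.1.2)]
  simp only [Fintype.card_prod, Fintype.card_pi, hslots,
    Finset.prod_const, Finset.card_univ, card_edgesContaining]
  ring

variable [Field F]

abbrev Randomness : Type := (P → F) × (Γ.edges → Point Γ r → P → F)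

abbrev Outcome : Type := (Fin r → F) × Randomness Γ r F

variable {Γ r F} (α : Point Γ r ↪ F)

def ownShare (s : Fin r → F) (a : P → F) (p : P) : F :=
  if {p} ∈ Γ.edges then polyEval s (α (.inl p)) else a p

def target (s : Fin r → F) (a : P → F) (x : Point Γ r) : F :=
  polyEval s (α x) - Sum.elim (ownShare α s a) 0 x

def piece (ω : Outcome Γ r F) (E : Γ.edges) (x : Point Γ r) : P → F :=
  additiveShare (holders Γ r E x) (lead Γ r E x) (target α ω.1 ω.2.1 x) (ω.2.2 E x)

def share (p : P) (ω : Outcome Γ r F) : Share Γ r F p :=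
  (ownShare α ω.1 ω.2.1 p, fun E x => piece α ω E.1 x.1 p)

lemma polyEval_eq_add_sum_piece (ω : Outcome Γ r F) (E : Γ.edges) (x : Point Γ r) :
    polyEval ω.1 (α x) = Sum.elim (ownShare α ω.1 ω.2.1) 0 x
      + ∑ w ∈ holders Γ r E x, piece α ω E x w := by
  by_cases h : (holders Γ r E x).Nonempty
  · rw [piece, sum_additiveShare (lead_mem Γ r h), target, add_sub_cancel]
  -- no holders: `E = {v}` and `x` is the point of `v`, who knows the value itself
  obtain ⟨v, hv⟩ := Γ.mem_nonempty E.1 E.2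
  have hx : x = .inl v := by
    by_contra hx
    exact h ⟨v, Finset.mem_filter.2 ⟨hv, hx⟩⟩
  have hE : E.1 = {v} := Finset.eq_singleton_iff_unique_mem.2 ⟨hv, fun w hw => by
    by_contra hwv
    exact h ⟨w, Finset.mem_filter.2 ⟨hw, hx ▸ fun h => hwv (Sum.inl_injective h).symm⟩⟩⟩
  rw [Finset.not_nonempty_iff_eq_empty.1 h, hx]
  simp [ownShare, ← hE, E.2]

variable {α}

lemma polyEval_eq_of_share_eq {A : Finset P} {E : Γ.edges} (hEA : E.1 ⊆ A)
    {ω ω' : Outcome Γ r F} (h : ∀ p ∈ A, share α p ω = share α p ω') {x : Point Γ r}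
    (hx : x ∈ edgePoints Γ r E) : polyEval ω.1 (α x) = polyEval ω'.1 (α x) := by
  rw [polyEval_eq_add_sum_piece α ω E x, polyEval_eq_add_sum_piece α ω' E x]
  congr 1
  · rcases x with v | y
    · exact congrArg Prod.fst (h v (hEA (by simpa [edgePoints] using hx)))
    · rfl
  · refine Finset.sum_congr rfl fun w hw => ?_
    obtain ⟨hwE, hxw⟩ := Finset.mem_filter.1 hw
    exact congrFun (congrFun (congrArg Prod.snd (h w (hEA hwE))) ⟨E, hwE⟩)
      ⟨x, Finset.mem_erase.2 ⟨hxw, hx⟩⟩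

lemma secret_eq_of_share_eq (hsize : ∀ E ∈ Γ.edges, E.card ≤ r) {A : Finset P}
    (hA : Γ.Qualified A) {ω ω' : Outcome Γ r F} (h : ∀ p ∈ A, share α p ω = share α p ω') :
    ω.1 = ω'.1 := by
  obtain ⟨E, hE, hEA⟩ := hA
  refine eq_of_forall_mem_polyEval_eq (T := (edgePoints Γ r ⟨E, hE⟩).map α)
    (by rw [Finset.card_map, card_edgePoints Γ r (hsize E hE)]) ?_
  simp only [Finset.mem_map]
  rintro _ ⟨x, hx, rfl⟩
  exact polyEval_eq_of_share_eq hEA h hx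

variable (α)

lemma exists_ownShare_shift {A : Finset P} (hA : ∀ v ∈ A, {v} ∉ Γ.edges) (Δ : Fin r → F) :
    ∃ (t : P → F) (δ : Point Γ r → F), (∀ v ∉ A, δ (.inl v) = 0) ∧ ∀ s a,
      (∀ v ∈ A, ownShare α (s + Δ) (a + t) v = ownShare α s a v) ∧
      ∀ x, target α (s + Δ) (a + t) x = target α s a x + δ x := by
  -- the masks of the participants outside `A` absorb the shift of the values at their points
  refine ⟨fun v => if v ∈ A then 0 else polyEval Δ (α (.inl v)),
    Sum.elim (fun v => if v ∈ A then polyEval Δ (α (.inl v)) else 0)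
      fun y => polyEval Δ (α (.inr y)),
    fun v hv => if_neg hv, fun s a => ⟨fun v hv => by simp [ownShare, hA v hv, hv], ?_⟩⟩
  rintro (v | y)
  · by_cases hv : v ∈ A
    · simp only [target, polyEval_add, Sum.elim_inl, ownShare, hA v hv, ↓reduceIte,
        Pi.add_apply, hv, add_zero]
      ring
    · by_cases hs : {v} ∈ Γ.edges <;> simp [target, ownShare, hs, hv, polyEval_add]
  · simp [target, polyEval_add]

lemma exists_piece_shift {A : Finset P} (hA : ¬ Γ.Qualified A) (δ : Point Γ r → F)
    (hδ : ∀ v ∉ A, δ (.inl v) = 0) :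
    ∃ t : Γ.edges → Point Γ r → P → F, ∀ E x v b, ∀ p ∈ A,
      additiveShare (holders Γ r E x) (lead Γ r E x) (v + δ x) (b + t E x) p
        = additiveShare (holders Γ r E x) (lead Γ r E x) v b p := by
  suffices ∀ E x, ∃ t : P → F, ∀ v b, ∀ p ∈ A,
      additiveShare (holders Γ r E x) (lead Γ r E x) (v + δ x) (b + t) p
        = additiveShare (holders Γ r E x) (lead Γ r E x) v b p by
    choose t ht using this
    exact ⟨t, ht⟩
  intro E x
  by_cases hx : δ x = 0
  · exact ⟨0, fun v b p _ => by simp [hx]⟩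
  obtain ⟨w₀, hw₀E, hw₀A⟩ := Finset.not_subset.1 fun hEA => hA ⟨E.1, E.2, hEA⟩
  have hw₀ : w₀ ∈ holders Γ r E x :=
    Finset.mem_filter.2 ⟨hw₀E, fun h => hx (h ▸ hδ w₀ hw₀A)⟩
  obtain ⟨t, ht⟩ := exists_additiveShare_add_eq hw₀ (lead Γ r E x) (δ x)
  exact ⟨t, fun v b p hp => ht v b p (ne_of_mem_of_not_mem hp hw₀A)⟩

lemma exists_share_shift {A : Finset P} (hA : ¬ Γ.Qualified A) (Δ : Fin r → F) :
    ∃ τ : Randomness Γ r F, ∀ ω, ∀ p ∈ A, share α p (ω + (Δ, τ)) = share α p ω := by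
  have hsingle : ∀ v ∈ A, {v} ∉ Γ.edges := fun v hv hs =>
    hA ⟨{v}, hs, Finset.singleton_subset_iff.2 hv⟩
  obtain ⟨t₁, δ, hδ, ht₁⟩ := exists_ownShare_shift α hsingle Δ
  obtain ⟨t₂, ht₂⟩ := exists_piece_shift hA δ hδ
  refine ⟨(t₁, t₂), fun ω p hp => Prod.ext ((ht₁ ω.1 ω.2.1).1 p hp) (funext₂ fun E x => ?_)⟩
  show additiveShare _ _ (target α (ω.1 + Δ) (ω.2.1 + t₁) x.1) (ω.2.2 E x + t₂ E x) p = _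
  rw [(ht₁ ω.1 ω.2.1).2, ht₂ _ _ _ _ p hp]
  rfl

variable [Fintype P] [Fintype F]

def scheme : Scheme P := uniformScheme (Outcome Γ r F) Prod.fst (share α)

lemma scheme_realizes (hr : 0 < r) (hsize : ∀ E ∈ Γ.edges, E.card ≤ r) :
    (scheme α).Realizes Γ :=
  have : Nonempty (Fin r) := ⟨⟨0, hr⟩⟩
  uniformScheme_realizes (fun _ hA _ _ h => secret_eq_of_share_eq hsize hA h) fun _ hA Δ =>
    let ⟨τ, hτ⟩ := exists_share_shift α hA Δ
    ⟨Equiv.addRight (Δ, τ), fun ω => ⟨hτ ω, rfl⟩⟩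

lemma scheme_complexity_le (hr : 0 < r) (hsize : ∀ E ∈ Γ.edges, E.card ≤ r) :
    (scheme α).complexity ≤ ENNReal.ofReal (((1 + Γ.maxDegree * (r - 1) : ℕ) : ℝ) / r) := by
  have hF : 0 < Real.log (Fintype.card F) :=
    Real.log_pos (by exact_mod_cast Fintype.one_lt_card)
  have hsec : H (scheme α).μ (scheme α).sec = r * Real.log (Fintype.card F) := by
    rw [scheme, uniformScheme_H_sec fun Δ => ⟨Equiv.addRight (Δ, 0), fun _ => rfl⟩,
      Fintype.card_fun, Fintype.card_fin, Nat.cast_pow, Real.log_pow]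
  have hsh : ∀ p, H (scheme α).μ ((scheme α).sh p)
      ≤ ((1 + Γ.maxDegree * (r - 1) : ℕ) : ℝ) * Real.log (Fintype.card F) := fun p => by
    refine (uniformScheme_H_sh_le p).trans ?_
    rw [card_share Γ r F hsize, Nat.cast_pow, Real.log_pow]
    gcongr
    exact Finset.le_sup (f := Γ.degree) (Finset.mem_univ p)
  have := (scheme α).complexity_le_ofReal_div (by positivity) hsec hsh
  rwa [mul_div_mul_right _ _ hF.ne'] at this

end EvalScheme

/-- If every minimal qualified set of `Γ` has size at most `r`
(`r ≥ 2`) and `d` is the maximal degree, then some perfect secret sharing scheme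
realizes `Γ` with complexity at most `d - (d-1)/r`; consequently
`σ(Γ) ≤ d - (d-1)/r`. -/
theorem statement4 {P : Type} [Fintype P] [DecidableEq P] (Γ : AccessStructure P)
    (r : ℕ) (hr : 2 ≤ r) (hsize : ∀ E ∈ Γ.edges, E.card ≤ r) :
    (∃ 𝒮 : Scheme P, 𝒮.Realizes Γ ∧
        𝒮.complexity ≤ ENNReal.ofReal
          ((Γ.maxDegree : ℝ) - ((Γ.maxDegree : ℝ) - 1) / (r : ℝ))) ∧
      sigmaC Γ ≤ ENNReal.ofReal
        ((Γ.maxDegree : ℝ) - ((Γ.maxDegree : ℝ) - 1) / (r : ℝ)) := by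
  obtain ⟨q, hq_le, hq⟩ := Nat.exists_infinite_primes (Fintype.card (EvalScheme.Point Γ r))
  have := Fact.mk hq
  obtain ⟨α⟩ := Function.Embedding.nonempty_of_card_le (α := EvalScheme.Point Γ r) (β := ZMod q)
    (by rwa [ZMod.card])
  have hrealizes := EvalScheme.scheme_realizes α (by omega) hsize
  have hbound : (((1 + Γ.maxDegree * (r - 1) : ℕ) : ℝ) / r)
      = (Γ.maxDegree : ℝ) - ((Γ.maxDegree : ℝ) - 1) / (r : ℝ) := by
    push_cast [Nat.cast_sub (by omega : 1 ≤ r)]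
    field_simp
    ring
  have hcomplexity := hbound ▸ EvalScheme.scheme_complexity_le α (by omega) hsize
  exact ⟨⟨_, hrealizes, hcomplexity⟩, (sigmaC_le_complexity hrealizes).trans hcomplexity⟩

end

end OnlineSecretSharing
end

section
/- Let P_6 be the path on the six vertices a, b, x, a', b', y (in this order), and let f be an entropy function for P_6 such that f(μ(A)) = f(A) for every subset A ⊆ {a, b, a', b'} and every permutation μ of {a, b, a', b'} that is an automorphism of the graph on {a, b, a', b'} with edge set {{a,b}, {a',b'}}. Then f({a}) + f({x}) ≥ 7/2; in particular, if f is α-bounded then α ≥ 7/4. -/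
open MeasureTheory Finset
open scoped ENNReal

namespace OnlineSecretSharing

noncomputable section

/-- Let `P₆` be the path on the six vertices
`a = 0, b = 1, x = 2, a' = 3, b' = 4, y = 5` (so `P₆ = pathAS 4`), and let `f`
be an entropy function for `P₆` that is symmetric on the induced matching on
`{a, b, a', b'} = {0, 1, 3, 4}` with edges `{a,b}` and `{a',b'}`. Then
`f({a}) + f({x}) ≥ 7/2`; in particular, if `f` is `α`-bounded then `α ≥ 7/4`. -/
theorem statement7 (f : Finset (Fin 6) → ℝ) (hf : IsEntropyFn (pathAS 4) f)
    (hsym : ∀ μ : Equiv.Perm (Fin 6),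
      (∀ i ∈ ({0, 1, 3, 4} : Finset (Fin 6)), μ i ∈ ({0, 1, 3, 4} : Finset (Fin 6))) →
      (({μ 0, μ 1} : Finset (Fin 6)) = {0, 1} ∨ ({μ 0, μ 1} : Finset (Fin 6)) = {3, 4}) →
      (({μ 3, μ 4} : Finset (Fin 6)) = {0, 1} ∨ ({μ 3, μ 4} : Finset (Fin 6)) = {3, 4}) →
      ∀ A ⊆ ({0, 1, 3, 4} : Finset (Fin 6)), f (A.image μ) = f A) :
    7 / 2 ≤ f {0} + f {2} ∧ ∀ α : ℝ, (∀ p : Fin 6, f {p} ≤ α) → 7 / 4 ≤ α := by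
  obtain ⟨h0, hmono, hsub, hd, he⟩ := hf
  -- Qualified / unqualified facts
  have q12 : (pathAS 4).Qualified {1, 2} :=
    (by decide : ∃ E ∈ (pathAS 4).edges, E ⊆ ({1, 2} : Finset (Fin 6)))
  have q23 : (pathAS 4).Qualified {2, 3} :=
    (by decide : ∃ E ∈ (pathAS 4).edges, E ⊆ ({2, 3} : Finset (Fin 6)))
  have q023 : (pathAS 4).Qualified {0, 2, 3} :=
    (by decide : ∃ E ∈ (pathAS 4).edges, E ⊆ ({0, 2, 3} : Finset (Fin 6)))
  have q034 : (pathAS 4).Qualified {0, 3, 4} :=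
    (by decide : ∃ E ∈ (pathAS 4).edges, E ⊆ ({0, 3, 4} : Finset (Fin 6)))
  have q0234 : (pathAS 4).Qualified {0, 2, 3, 4} :=
    (by decide : ∃ E ∈ (pathAS 4).edges, E ⊆ ({0, 2, 3, 4} : Finset (Fin 6)))
  have q0245 : (pathAS 4).Qualified {0, 2, 4, 5} :=
    (by decide : ∃ E ∈ (pathAS 4).edges, E ⊆ ({0, 2, 4, 5} : Finset (Fin 6)))
  have q1235 : (pathAS 4).Qualified {1, 2, 3, 5} :=
    (by decide : ∃ E ∈ (pathAS 4).edges, E ⊆ ({1, 2, 3, 5} : Finset (Fin 6)))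
  have n2 : ¬ (pathAS 4).Qualified {2} := fun h =>
    absurd h (by decide : ¬ ∃ E ∈ (pathAS 4).edges, E ⊆ ({2} : Finset (Fin 6)))
  have n03 : ¬ (pathAS 4).Qualified {0, 3} := fun h =>
    absurd h (by decide : ¬ ∃ E ∈ (pathAS 4).edges, E ⊆ ({0, 3} : Finset (Fin 6)))
  have n024 : ¬ (pathAS 4).Qualified {0, 2, 4} := fun h =>
    absurd h (by decide : ¬ ∃ E ∈ (pathAS 4).edges, E ⊆ ({0, 2, 4} : Finset (Fin 6)))
  have n025 : ¬ (pathAS 4).Qualified {0, 2, 5} := fun h =>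
    absurd h (by decide : ¬ ∃ E ∈ (pathAS 4).edges, E ⊆ ({0, 2, 5} : Finset (Fin 6)))
  have n135 : ¬ (pathAS 4).Qualified {1, 3, 5} := fun h =>
    absurd h (by decide : ¬ ∃ E ∈ (pathAS 4).edges, E ⊆ ({1, 3, 5} : Finset (Fin 6)))
  -- symmetry equalities
  have Y1 : f {1} = f {0} := by
    have h := hsym (Equiv.swap 0 1) (by decide) (by decide) (by decide) {0} (by decide)
    rwa [show ({0} : Finset (Fin 6)).image (Equiv.swap 0 1) = {1} by decide] at h
  have Y2 : f {3} = f {0} := by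
    have h := hsym ((Equiv.swap 0 3).trans (Equiv.swap 1 4)) (by decide) (by decide)
      (by decide) {0} (by decide)
    rwa [show ({0} : Finset (Fin 6)).image ((Equiv.swap 0 3).trans (Equiv.swap 1 4))
      = {3} by decide] at h
  have Y3 : f {0, 4} = f {0, 3} := by
    have h := hsym (Equiv.swap 3 4) (by decide) (by decide) (by decide) {0, 3} (by decide)
    rwa [show ({0, 3} : Finset (Fin 6)).image (Equiv.swap 3 4) = {0, 4} by decide] at h
  have Y4 : f {1, 3} = f {0, 3} := by
    have h := hsym (Equiv.swap 0 1) (by decide) (by decide) (by decide) {0, 3} (by decide)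
    rwa [show ({0, 3} : Finset (Fin 6)).image (Equiv.swap 0 1) = {1, 3} by decide] at h
  -- submodularity instances
  have S1 := hsub {1} {2}
  rw [show ({1} : Finset (Fin 6)) ∩ {2} = ∅ by decide,
      show ({1} : Finset (Fin 6)) ∪ {2} = {1, 2} by decide] at S1
  have S2 := hsub {2} {3}
  rw [show ({2} : Finset (Fin 6)) ∩ {3} = ∅ by decide,
      show ({2} : Finset (Fin 6)) ∪ {3} = {2, 3} by decide] at S2
  have S3 := hsub {0, 2} {0, 3}
  rw [show ({0, 2} : Finset (Fin 6)) ∩ {0, 3} = {0} by decide,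
      show ({0, 2} : Finset (Fin 6)) ∪ {0, 3} = {0, 2, 3} by decide] at S3
  have S4 := hsub {0, 3} {0, 4}
  rw [show ({0, 3} : Finset (Fin 6)) ∩ {0, 4} = {0} by decide,
      show ({0, 3} : Finset (Fin 6)) ∪ {0, 4} = {0, 3, 4} by decide] at S4
  have S5 := hsub {0, 2, 4} {0, 2, 5}
  rw [show ({0, 2, 4} : Finset (Fin 6)) ∩ {0, 2, 5} = {0, 2} by decide,
      show ({0, 2, 4} : Finset (Fin 6)) ∪ {0, 2, 5} = {0, 2, 4, 5} by decide] at S5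
  have S6 := hsub {1, 2, 3} {1, 3, 5}
  rw [show ({1, 2, 3} : Finset (Fin 6)) ∩ {1, 3, 5} = {1, 3} by decide,
      show ({1, 2, 3} : Finset (Fin 6)) ∪ {1, 3, 5} = {1, 2, 3, 5} by decide] at S6
  -- strong monotonicity instances
  have D1 := hd {0, 2, 4} {0, 2, 3, 4} (by decide) n024 q0234
  have D2 := hd {0, 2, 5} {0, 2, 4, 5} (by decide) n025 q0245
  have D3 := hd {1, 3, 5} {1, 2, 3, 5} (by decide) n135 q1235
  -- strong submodularity instances
  have E1 := he {1, 2} {2, 3} q12 q23 (by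
    rw [show ({1, 2} : Finset (Fin 6)) ∩ {2, 3} = {2} by decide]; exact n2)
  rw [show ({1, 2} : Finset (Fin 6)) ∩ {2, 3} = {2} by decide,
      show ({1, 2} : Finset (Fin 6)) ∪ {2, 3} = {1, 2, 3} by decide] at E1
  have E2 := he {0, 2, 3} {0, 3, 4} q023 q034 (by
    rw [show ({0, 2, 3} : Finset (Fin 6)) ∩ {0, 3, 4} = {0, 3} by decide]; exact n03)
  rw [show ({0, 2, 3} : Finset (Fin 6)) ∩ {0, 3, 4} = {0, 3} by decide,
      show ({0, 2, 3} : Finset (Fin 6)) ∪ {0, 3, 4} = {0, 2, 3, 4} by decide] at E2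
  have main : 7 / 2 ≤ f {0} + f {2} := by linarith
  refine ⟨main, fun α hα => ?_⟩
  have h1 := hα 0
  have h2 := hα 2
  linarith

end

end OnlineSecretSharing
end
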